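/- arXiv:2202.04004 — 6 statements merged into one kernel-verified Lean document; each statement's English description precedes it below -/
import Mathlib

section
/- Let H and L be linear subspaces of R^n with H ∩ L^⊥ = {0}. Then L + R_H L = H + L, where R_H L denotes the image of L under the reflection R_H in H and + denotes the sum of subspaces. -/
open scoped InnerProductSpace

namespace Submodule

variable {𝕜 E : Type*} [RCLike 𝕜] [NormedAddCommGroup E] [InnerProductSpace 𝕜 E]

theorem sup_map_reflection_eq_sup_map_starProjection (K L : Submodule 𝕜 E)
    [K.HasOrthogonalProjection] :
    L ⊔ L.map (K.reflection.toLinearEquiv : E →ₗ[𝕜] E) =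
      L ⊔ L.map (K.starProjection : E →ₗ[𝕜] E) := by
  refine le_antisymm (sup_le le_sup_left ?_) (sup_le le_sup_left ?_)
  · rintro _ ⟨x, hx, rfl⟩
    rw [LinearEquiv.coe_coe, LinearIsometryEquiv.coe_toLinearEquiv, reflection_apply]
    exact sub_mem (nsmul_mem (mem_sup_right (mem_map_of_mem hx)) 2) (mem_sup_left hx)
  · rintro _ ⟨x, hx, rfl⟩
    have hPx : K.starProjection x = (2⁻¹ : 𝕜) • (x + K.reflection x) := by
      rw [reflection_apply]
      module
    rw [ContinuousLinearMap.coe_coe, hPx]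
    exact smul_mem _ _ (add_mem (mem_sup_left hx) (mem_sup_right (mem_map_of_mem hx)))

/-- The projection `P` onto `K` is self-adjoint and fixes `K`, so `y ∈ K` is orthogonal to
`P L` iff it is orthogonal to `L`; hence `P L` is a subspace of `K` with no orthogonal
complement inside `K`. -/
theorem map_starProjection_eq_of_inf_orthogonal_eq_bot (K L : Submodule 𝕜 E)
    [FiniteDimensional 𝕜 K] (h : K ⊓ Lᗮ = ⊥) :
    L.map (K.starProjection : E →ₗ[𝕜] E) = K := by
  set M := L.map (K.starProjection : E →ₗ[𝕜] E)
  have hMK : M ≤ K := by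
    rintro _ ⟨x, -, rfl⟩
    exact starProjection_apply_mem K x
  have : FiniteDimensional 𝕜 M := finiteDimensional_of_le hMK
  have hMo : Mᗮ ⊓ K = ⊥ := by
    refine eq_bot_iff.mpr fun y ⟨hyM, hyK⟩ => h ▸ ⟨hyK, fun x hx => ?_⟩
    calc ⟪x, y⟫_𝕜 = ⟪x, K.starProjection y⟫_𝕜 := by rw [starProjection_eq_self_iff.mpr hyK]
      _ = ⟪K.starProjection x, y⟫_𝕜 := (inner_starProjection_left_eq_right K x y).symm
      _ = 0 := (mem_orthogonal M y).mp hyM _ ⟨x, hx, rfl⟩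
  simpa [hMo] using sup_orthogonal_inf_of_hasOrthogonalProjection hMK

end Submodule

/-- If `H ∩ L^⊥ = {0}`, then `L + R_H L = H + L`. -/
theorem sum_with_reflection_image (n : ℕ)
    (H L : Submodule ℝ (EuclideanSpace ℝ (Fin n))) (h : H ⊓ Lᗮ = ⊥) :
    L ⊔ Submodule.map
        ((Submodule.reflection H).toLinearEquiv :
          EuclideanSpace ℝ (Fin n) →ₗ[ℝ] EuclideanSpace ℝ (Fin n)) L = H ⊔ L := by
  rw [Submodule.sup_map_reflection_eq_sup_map_starProjection,
    Submodule.map_starProjection_eq_of_inf_orthogonal_eq_bot H L h, sup_comm]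
end

section
/- Let n ≥ 3, let H be a 1-dimensional linear subspace of R^n, and let O(n)_H denote the subgroup of orthogonal transformations of R^n fixing H pointwise. Let φ be an orthogonal transformation of R^n with φH ≠ H. If E ⊆ S^{n−1} is nonempty, closed, invariant under φ (i.e., φE = E), and invariant under every element of O(n)_H, then E = S^{n−1}. -/
/-!
Let `u` span `H` and `v = φ u`. Reflecting in the hyperplane orthogonal to `x - y` shows that
`E` contains, with each of its points `x`, every unit vector `y` with `⟪u, y⟫ = ⟪u, x⟫`; by
conjugating with `φ`, the same holds for `v`. Let `γ ∈ (0, π)` be the angle between `u` and `v`.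
Since there is a third dimension, the unit vectors at angle `θ` from `u` have every inner product
with `v` between `cos (θ + γ)` and `cos (θ - γ)`. Moving first along a level set of `⟪u, ·⟫` and
then along one of `⟪v, ·⟫` therefore changes the angle to `u` by any amount up to
`min γ (π - γ)`, so every angle in `[0, π]`, hence every level set of `⟪u, ·⟫`, is reached.
-/

open Real Set Submodule Module InnerProductGeometry
open scoped RealInnerProductSpace

theorem IsPreconnected.subset_of_forall_dist_le {α : Type*} [PseudoMetricSpace α] {s S : Set α}
    {δ : ℝ} (hs : IsPreconnected s) (hδ : 0 < δ) {x₀ : α} (hx₀ : x₀ ∈ s ∩ S)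
    (h : ∀ x ∈ s ∩ S, ∀ y ∈ s, dist x y ≤ δ → y ∈ S) : s ⊆ S := by
  intro y hy
  refine (hs.induction₂ (fun a b ↦ a ∈ S ↔ b ∈ S) (fun x hx ↦ ?_) (fun _ _ _ _ _ _ ↦ Iff.trans)
    (fun _ _ _ _ ↦ Iff.symm) hx₀.1 hy).1 hx₀.2
  filter_upwards [self_mem_nhdsWithin,
    nhdsWithin_le_nhds (Metric.closedBall_mem_nhds x hδ)] with y hy hxy
  exact ⟨fun hxS ↦ h x ⟨hx, hxS⟩ y hy (dist_comm x y ▸ hxy),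
    fun hyS ↦ h y ⟨hy, hyS⟩ x hx hxy⟩

theorem Real.cos_le_cos_of_abs_le {x y : ℝ} (h₁ : |y| ≤ |x|) (h₂ : |y| ≤ 2 * π - |x|) :
    cos x ≤ cos y := by
  rw [← cos_abs x, ← cos_abs y]
  rcases le_total |x| π with hx | hx
  · exact cos_le_cos_of_nonneg_of_le_pi (abs_nonneg y) hx h₁
  · rw [← cos_two_pi_sub]
    exact cos_le_cos_of_nonneg_of_le_pi (abs_nonneg y) (by linarith) h₂

theorem Real.cos_add_le_cos_sub {θ θ' γ : ℝ} (hθ : θ ∈ Icc 0 π) (hθ' : θ' ∈ Icc 0 π)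
    (h : |θ - θ'| ≤ min γ (π - γ)) : cos (θ' + γ) ≤ cos (θ - γ) := by
  obtain ⟨hθ₀, hθπ⟩ := hθ
  obtain ⟨hθ'₀, hθ'π⟩ := hθ'
  obtain ⟨h₁, h₂⟩ := le_min_iff.1 h
  rw [abs_le] at h₁ h₂
  have hγ : 0 ≤ θ' + γ := by linarith
  apply cos_le_cos_of_abs_le <;> rw [abs_of_nonneg hγ, abs_le] <;> constructor <;> linarith

theorem Submodule.span_singleton_eq_of_mem {K M : Type*} [Field K] [AddCommGroup M]
    [Module K M] {u v : M} (hv : v ≠ 0) (h : v ∈ K ∙ u) : K ∙ v = K ∙ u := by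
  obtain ⟨c, rfl⟩ := mem_span_singleton.1 h
  exact span_singleton_smul_eq (isUnit_iff_ne_zero.2 (left_ne_zero_of_smul hv)) u

section

variable {V : Type*} [NormedAddCommGroup V] [InnerProductSpace ℝ V]

theorem exists_norm_eq_one_inner_eq_of_mem_span_pair [FiniteDimensional ℝ V]
    (hV : 3 ≤ finrank ℝ V) {u v p : V} (hp : p ∈ span ℝ {u, v}) (hp₁ : ‖p‖ ≤ 1) :
    ∃ x : V, ‖x‖ = 1 ∧ ⟪u, x⟫ = ⟪u, p⟫ ∧ ⟪v, x⟫ = ⟪v, p⟫ := by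
  classical
  set K := span ℝ ({u, v} : Set V)
  have hK : finrank ℝ K ≤ 2 := by
    have := finrank_span_finset_le_card (R := ℝ) ({u, v} : Finset V)
    rw [Finset.coe_pair] at this
    exact this.trans Finset.card_le_two
  have hKperp : Kᗮ ≠ ⊥ := by
    intro h
    have := K.finrank_add_finrank_orthogonal
    rw [h, finrank_bot] at this
    omega
  obtain ⟨w₀, hw₀K, hw₀⟩ := Submodule.ne_bot_iff _ |>.mp hKperp
  set w := (‖w₀‖⁻¹ : ℝ) • w₀
  have hwK : w ∈ Kᗮ := Kᗮ.smul_mem _ hw₀K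
  have hw : ‖w‖ = 1 := norm_smul_inv_norm hw₀
  set c := √(1 - ‖p‖ ^ 2)
  have hinner {z : V} (hz : z ∈ K) : ⟪z, c • w⟫ = 0 :=
    inner_right_of_mem_orthogonal hz (Kᗮ.smul_mem c hwK)
  refine ⟨p + c • w, ?_, ?_, ?_⟩
  · have hsq : ‖p + c • w‖ ^ 2 = 1 := by
      rw [norm_add_sq_real, hinner hp, norm_smul, hw, mul_one, Real.norm_eq_abs, sq_abs,
        sq_sqrt (by nlinarith [norm_nonneg p])]
      ring
    rwa [pow_eq_one_iff_of_nonneg (norm_nonneg _) two_ne_zero] at hsq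
  · rw [inner_add_right, hinner (subset_span (by simp)), add_zero]
  · rw [inner_add_right, hinner (subset_span (by simp)), add_zero]

theorem exists_norm_eq_one_inner_eq_cos [FiniteDimensional ℝ V] (hV : 3 ≤ finrank ℝ V)
    {u v : V} (hu : ‖u‖ = 1) (hv : ‖v‖ = 1) (hγ₀ : 0 < angle u v) (hγπ : angle u v < π)
    {θ t : ℝ} (ht₁ : cos (θ + angle u v) ≤ t) (ht₂ : t ≤ cos (θ - angle u v)) :
    ∃ x : V, ‖x‖ = 1 ∧ ⟪u, x⟫ = cos θ ∧ ⟪v, x⟫ = t := by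
  set γ := angle u v
  have huv : ⟪u, v⟫ = cos γ := inner_eq_cos_angle_of_norm_eq_one hu hv
  have hvu : ⟪v, u⟫ = cos γ := real_inner_comm u v ▸ huv
  have hsin : 0 < sin γ := sin_pos_of_pos_of_lt_pi hγ₀ hγπ
  have hγ := sin_sq_add_cos_sq γ
  set a := (cos θ - t * cos γ) / sin γ ^ 2
  set b := (t - cos θ * cos γ) / sin γ ^ 2
  set p := a • u + b • v
  have hup : ⟪u, p⟫ = cos θ := by
    rw [inner_add_right, real_inner_smul_right, real_inner_smul_right, real_inner_self_eq_norm_sq,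
      hu, huv]
    simp only [a, b]
    field_simp
    linear_combination -cos θ * hγ
  have hvp : ⟪v, p⟫ = t := by
    rw [inner_add_right, real_inner_smul_right, real_inner_smul_right, real_inner_self_eq_norm_sq,
      hv, hvu]
    simp only [a, b]
    field_simp
    linear_combination -t * hγ
  have hp : ‖p‖ ≤ 1 := by
    have hsq : ‖p‖ ^ 2 = a * cos θ + b * t := by
      rw [← real_inner_self_eq_norm_sq, inner_add_left, real_inner_smul_left,
        real_inner_smul_left, hup, hvp]
    rw [← pow_le_one_iff_of_nonneg (norm_nonneg p) two_ne_zero, hsq, div_mul_eq_mul_div,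
      div_mul_eq_mul_div, ← add_div, div_le_one (by positivity)]
    -- the bounds on `t` say `(t - cos θ cos γ)² ≤ sin² θ sin² γ`
    rw [cos_add] at ht₁
    rw [cos_sub] at ht₂
    nlinarith [mul_nonneg (sub_nonneg.2 ht₁) (sub_nonneg.2 ht₂), sin_sq_add_cos_sq θ]
  obtain ⟨x, hx, hux, hvx⟩ :=
    exists_norm_eq_one_inner_eq_of_mem_span_pair hV (mem_span_pair.2 ⟨a, b, rfl⟩) hp
  exact ⟨x, hx, hux.trans hup, hvx.trans hvp⟩

theorem sphere_subset_of_inner_eq_imp_mem [FiniteDimensional ℝ V] (hV : 3 ≤ finrank ℝ V)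
    {u v : V} (hu : ‖u‖ = 1) (hv : ‖v‖ = 1) (huv : v ∉ ℝ ∙ u) {E : Set V} (hne : E.Nonempty)
    (hE : E ⊆ Metric.sphere 0 1)
    (hEu : ∀ x ∈ E, ∀ y ∈ Metric.sphere (0 : V) 1, ⟪u, x⟫ = ⟪u, y⟫ → y ∈ E)
    (hEv : ∀ x ∈ E, ∀ y ∈ Metric.sphere (0 : V) 1, ⟪v, x⟫ = ⟪v, y⟫ → y ∈ E) :
    Metric.sphere 0 1 ⊆ E := by
  have hmem {r : ℝ} : r • u ∈ ℝ ∙ u := smul_mem _ r (mem_span_singleton_self u)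
  set γ := angle u v
  have hγ₀ : 0 < γ := (angle_nonneg u v).lt_of_ne' fun h ↦ by
    obtain ⟨-, r, -, hr⟩ := angle_eq_zero_iff.1 h
    exact huv (hr ▸ hmem)
  have hγπ : γ < π := (angle_le_pi u v).lt_of_ne fun h ↦ by
    obtain ⟨-, r, -, hr⟩ := angle_eq_pi_iff.1 h
    exact huv (hr ▸ hmem)
  have hδ : 0 < min γ (π - γ) := lt_min hγ₀ (sub_pos.2 hγπ)
  have hself (θ : ℝ) : |θ - θ| ≤ min γ (π - γ) := by simpa using hδ.le
  set Θ := {θ : ℝ | ∃ x ∈ E, ⟪u, x⟫ = cos θ}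
  have hstep : ∀ θ ∈ Icc 0 π ∩ Θ, ∀ θ' ∈ Icc 0 π, dist θ θ' ≤ min γ (π - γ) → θ' ∈ Θ := by
    rintro θ ⟨hθ, x, hx, hxθ⟩ θ' hθ' hθθ'
    rw [Real.dist_eq] at hθθ'
    have hθ'θ : |θ' - θ| ≤ min γ (π - γ) := abs_sub_comm θ θ' ▸ hθθ'
    set t := max (cos (θ + γ)) (cos (θ' + γ))
    obtain ⟨x₁, hx₁, hux₁, hvx₁⟩ := exists_norm_eq_one_inner_eq_cos hV hu hv hγ₀ hγπ
      (le_max_left _ _)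
      (max_le (cos_add_le_cos_sub hθ hθ (hself θ)) (cos_add_le_cos_sub hθ hθ' hθθ'))
    obtain ⟨x₂, hx₂, hux₂, hvx₂⟩ := exists_norm_eq_one_inner_eq_cos hV hu hv hγ₀ hγπ
      (le_max_right _ _)
      (max_le (cos_add_le_cos_sub hθ' hθ hθ'θ) (cos_add_le_cos_sub hθ' hθ' (hself θ')))
    have hx₁E : x₁ ∈ E := hEu x hx x₁ (mem_sphere_zero_iff_norm.2 hx₁) (hxθ.trans hux₁.symm)
    exact ⟨x₂, hEv x₁ hx₁E x₂ (mem_sphere_zero_iff_norm.2 hx₂) (hvx₁.trans hvx₂.symm), hux₂⟩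
  have hcos {x : V} (hx : x ∈ Metric.sphere (0 : V) 1) : ⟪u, x⟫ = cos (angle u x) :=
    inner_eq_cos_angle_of_norm_eq_one hu (mem_sphere_zero_iff_norm.1 hx)
  have hangle (x : V) : angle u x ∈ Icc 0 π := ⟨angle_nonneg u x, angle_le_pi u x⟩
  obtain ⟨x₀, hx₀⟩ := hne
  have hΘ : Icc 0 π ⊆ Θ := isPreconnected_Icc.subset_of_forall_dist_le hδ
    ⟨hangle x₀, x₀, hx₀, hcos (hE hx₀)⟩ hstep
  intro y hy
  obtain ⟨x, hx, hxy⟩ := hΘ (hangle y)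
  exact hEu x hx y hy (hxy.trans (hcos hy).symm)

theorem Submodule.exists_norm_eq_one_span_singleton_eq {K : Submodule ℝ V}
    (hK : finrank ℝ K = 1) : ∃ u : V, ‖u‖ = 1 ∧ ℝ ∙ u = K := by
  have : FiniteDimensional ℝ K := Module.finite_of_finrank_eq_succ hK
  obtain ⟨u₀, hu₀K, hu₀⟩ := K.ne_bot_iff.1 fun h ↦ by subst h; simp at hK
  have hu : ‖(‖u₀‖⁻¹ : ℝ) • u₀‖ = 1 := norm_smul_inv_norm hu₀
  refine ⟨_, hu, eq_of_le_of_finrank_eq ((span_singleton_le_iff_mem _ _).2 (K.smul_mem _ hu₀K)) ?_⟩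
  rw [hK, finrank_span_singleton (norm_ne_zero_iff.1 (hu ▸ one_ne_zero))]

theorem mem_of_norm_eq_of_inner_eq {E : Set V} {u x y : V}
    (hE : ∀ ψ : V ≃ₗᵢ[ℝ] V, ψ u = u → MapsTo ψ E E) (hx : x ∈ E) (hxy : ‖x‖ = ‖y‖)
    (huxy : ⟪u, x⟫ = ⟪u, y⟫) : y ∈ E := by
  have hu : u ∈ (ℝ ∙ (x - y))ᗮ := by
    rw [mem_orthogonal_singleton_iff_inner_right, inner_sub_left, real_inner_comm, huxy,
      real_inner_comm, sub_self]
  simpa [reflection_sub hxy] using hE _ (reflection_mem_subspace_eq_self hu) hx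

theorem mapsTo_of_apply_map_eq {E : Set V} {u : V} {φ : V ≃ₗᵢ[ℝ] V} (hφ : φ '' E = E)
    (hE : ∀ ψ : V ≃ₗᵢ[ℝ] V, ψ u = u → MapsTo ψ E E) (ψ : V ≃ₗᵢ[ℝ] V) (hψ : ψ (φ u) = φ u) :
    MapsTo ψ E E := by
  rw [← hφ]
  rintro _ ⟨z, hz, rfl⟩
  exact ⟨(φ.trans ψ).trans φ.symm z, hE _ (by simp [hψ]) hz, by simp⟩

end

theorem full_sphere_of_line_stabilizer_invariance_general (n : ℕ) (hn : 3 ≤ n)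
    (H : Submodule ℝ (EuclideanSpace ℝ (Fin n))) (hH : Module.finrank ℝ H = 1)
    (φ : EuclideanSpace ℝ (Fin n) ≃ₗᵢ[ℝ] EuclideanSpace ℝ (Fin n))
    (hφ : Submodule.map
      (φ.toLinearEquiv : EuclideanSpace ℝ (Fin n) →ₗ[ℝ] EuclideanSpace ℝ (Fin n)) H ≠ H)
    (E : Set (EuclideanSpace ℝ (Fin n))) (hne : E.Nonempty)
    (hsub : E ⊆ Metric.sphere 0 1)
    (hinvφ : φ '' E = E)
    (hstab : ∀ ψ : EuclideanSpace ℝ (Fin n) ≃ₗᵢ[ℝ] EuclideanSpace ℝ (Fin n),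
      (∀ x ∈ H, ψ x = x) → ψ '' E = E) :
    E = Metric.sphere 0 1 := by
  obtain ⟨u, hu, rfl⟩ := exists_norm_eq_one_span_singleton_eq hH
  have hEu (ψ : EuclideanSpace ℝ (Fin n) ≃ₗᵢ[ℝ] EuclideanSpace ℝ (Fin n)) (hψ : ψ u = u) :
      MapsTo ψ E E := by
    have hψE := hstab ψ fun x hx ↦ by
      obtain ⟨c, rfl⟩ := mem_span_singleton.1 hx
      rw [map_smul, hψ]
    simpa only [hψE] using mapsTo_image ψ E
  have hEv := mapsTo_of_apply_map_eq hinvφ hEu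
  have hv : ‖φ u‖ = 1 := φ.norm_map u ▸ hu
  have huv : φ u ∉ ℝ ∙ u := fun h ↦ hφ <| by
    rw [map_span, image_singleton]
    exact span_singleton_eq_of_mem (norm_ne_zero_iff.1 (hv ▸ one_ne_zero)) h
  have hnorm {x y} (hx : x ∈ E) (hy : y ∈ Metric.sphere (0 : EuclideanSpace ℝ (Fin n)) 1) :
      ‖x‖ = ‖y‖ := by
    rw [mem_sphere_zero_iff_norm.1 (hsub hx), mem_sphere_zero_iff_norm.1 hy]
  exact hsub.antisymm <| sphere_subset_of_inner_eq_imp_mem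
    (by rwa [finrank_euclideanSpace_fin]) hu hv huv hne hsub
    (fun x hx y hy ↦ mem_of_norm_eq_of_inner_eq hEu hx (hnorm hx hy))
    (fun x hx y hy ↦ mem_of_norm_eq_of_inner_eq hEv hx (hnorm hx hy))

/-- If `n ≥ 3`, `H` is a line through the origin, `φ` is an orthogonal transformation with
`φH ≠ H`, and `E ⊆ Sⁿ⁻¹` is nonempty, closed, invariant under `φ` and under every orthogonal
transformation fixing `H` pointwise, then `E = Sⁿ⁻¹`. -/
theorem full_sphere_of_line_stabilizer_invariance (n : ℕ) (hn : 3 ≤ n)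
    (H : Submodule ℝ (EuclideanSpace ℝ (Fin n))) (hH : Module.finrank ℝ H = 1)
    (φ : EuclideanSpace ℝ (Fin n) ≃ₗᵢ[ℝ] EuclideanSpace ℝ (Fin n))
    (hφ : Submodule.map
      (φ.toLinearEquiv : EuclideanSpace ℝ (Fin n) →ₗ[ℝ] EuclideanSpace ℝ (Fin n)) H ≠ H)
    (E : Set (EuclideanSpace ℝ (Fin n))) (hne : E.Nonempty) (hcl : IsClosed E)
    (hsub : E ⊆ Metric.sphere 0 1)
    (hinvφ : φ '' E = E)
    (hstab : ∀ ψ : EuclideanSpace ℝ (Fin n) ≃ₗᵢ[ℝ] EuclideanSpace ℝ (Fin n),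
      (∀ x ∈ H, ψ x = x) → ψ '' E = E) :
    E = Metric.sphere 0 1 :=
  full_sphere_of_line_stabilizer_invariance_general n hn H hH φ hφ E hne hsub hinvφ hstab
end

section
/- Let H_1 and H_2 be subspaces of R^n of dimensions k and i with i ≤ k, given in an orthonormal basis e_1, …, e_n by H_1 = span{e_1, …, e_k} and H_2 = span{cos α_j e_j + sin α_j e_{i+k+1−j} : j = 1, …, i} for angles α_1, …, α_i. If x = Σ_{j=1}^i ρ_j (cos θ_j · e_j + sin θ_j · e_{i+k+1−j}) + y_1 + y_2, with ρ_j ∈ R, θ_j ∈ [0, 2π), y_1 ∈ span{e_{i+1}, …, e_k}, and y_2 ∈ (H_1 + H_2)^⊥, then R_{H_2} x = Σ_{j=1}^i ρ_j (cos(2α_j − θ_j) e_j + sin(2α_j − θ_j) e_{i+k+1−j}) − y_1 − y_2. -/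
/-! In the plane spanned by `e_j` and `e_{i+k+1-j}` the subspace `H₂` meets the line through
`u = cos α_j e_j + sin α_j e_{i+k+1-j}`, and the rotated vector
`u' = -sin α_j e_j + cos α_j e_{i+k+1-j}` is orthogonal to all of `H₂`. Writing `θ = α + φ`,
the vector at angle `θ` is `cos φ u + sin φ u'`, whose reflection `cos φ u - sin φ u'` is the
vector at angle `α - φ = 2α - θ`. The remainder `y₁ + y₂` is orthogonal to `H₂`, so it changes
sign. -/

open Real Function Submodule

section Reflection

variable {E : Type*} [NormedAddCommGroup E] [InnerProductSpace ℝ E]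
  (K : Submodule ℝ E) [K.HasOrthogonalProjection]

theorem Submodule.reflection_cos_smul_add_sin_smul {u w : E} {α : ℝ}
    (hK : cos α • u + sin α • w ∈ K) (hKperp : (-sin α) • u + cos α • w ∈ Kᗮ) (θ : ℝ) :
    K.reflection (cos θ • u + sin θ • w) = cos (2 * α - θ) • u + sin (2 * α - θ) • w := by
  obtain ⟨φ, rfl⟩ : ∃ φ, θ = α + φ := ⟨θ - α, by ring⟩
  have hdecomp : cos (α + φ) • u + sin (α + φ) • w
      = cos φ • (cos α • u + sin α • w) + sin φ • ((-sin α) • u + cos α • w) := by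
    rw [cos_add, sin_add]
    module
  rw [hdecomp, map_add, map_smul, map_smul, reflection_mem_subspace_eq_self hK,
    reflection_mem_subspace_orthogonalComplement_eq_neg hKperp,
    show 2 * α - (α + φ) = α - φ by ring, cos_sub, sin_sub]
  module

theorem Submodule.reflection_sum_smul_cos_smul_add_sin_smul {κ : Type*} [Fintype κ]
    {u w : κ → E} {α : κ → ℝ} (hK : ∀ j, cos (α j) • u j + sin (α j) • w j ∈ K)
    (hKperp : ∀ j, (-sin (α j)) • u j + cos (α j) • w j ∈ Kᗮ) (ρ θ : κ → ℝ) {y : E}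
    (hy : y ∈ Kᗮ) :
    K.reflection ((∑ j, ρ j • (cos (θ j) • u j + sin (θ j) • w j)) + y)
      = (∑ j, ρ j • (cos (2 * α j - θ j) • u j + sin (2 * α j - θ j) • w j)) - y := by
  simp only [map_add, map_sum, map_smul, K.reflection_cos_smul_add_sin_smul (hK _) (hKperp _),
    reflection_mem_subspace_orthogonalComplement_eq_neg hy, sub_eq_add_neg]

end Reflection

section Orthonormal

variable {ι κ E : Type*} [NormedAddCommGroup E] [InnerProductSpace ℝ E] {e : ι → E}
  {f g : κ → ι}

theorem Submodule.mem_orthogonal_span_of_forall_inner {s : Set E} {w : E}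
    (h : ∀ u ∈ s, inner ℝ w u = 0) : w ∈ (span ℝ s)ᗮ :=
  isOrtho_iff_le.mp (isOrtho_span.mpr fun _ hw u hu => (Set.mem_singleton_iff.mp hw) ▸ h u hu)
    (mem_span_singleton_self w)

theorem Orthonormal.neg_sin_smul_add_cos_smul_mem_orthogonal_span (he : Orthonormal ℝ e)
    (hf : Injective f) (hg : Injective g) (hfg : ∀ j j', f j ≠ g j') (α : κ → ℝ) (j : κ) :
    (-sin (α j)) • e (f j) + cos (α j) • e (g j)
      ∈ (span ℝ (Set.range fun j => cos (α j) • e (f j) + sin (α j) • e (g j)))ᗮ := by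
  classical
  have he' := orthonormal_iff_ite.mp he
  refine mem_orthogonal_span_of_forall_inner ?_
  rintro _ ⟨j', rfl⟩
  simp only [inner_add_left, inner_add_right, real_inner_smul_left, real_inner_smul_right, he',
    hf.eq_iff, hg.eq_iff, if_neg (hfg _ _), if_neg (hfg _ _).symm]
  split_ifs with hjj
  · subst hjj
    ring
  · ring

theorem Orthonormal.mem_orthogonal_span_of_notMem_range (he : Orthonormal ℝ e) {m : ι}
    (hmf : m ∉ Set.range f) (hmg : m ∉ Set.range g) (a b : κ → ℝ) :
    e m ∈ (span ℝ (Set.range fun j => a j • e (f j) + b j • e (g j)))ᗮ := by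
  refine mem_orthogonal_span_of_forall_inner ?_
  rintro _ ⟨j, rfl⟩
  rw [inner_add_right, real_inner_smul_right, real_inner_smul_right,
    he.inner_eq_zero fun h => hmf ⟨j, h.symm⟩, he.inner_eq_zero fun h => hmg ⟨j, h.symm⟩]
  ring

end Orthonormal

/-- Indices are zero-based: `e_j` for `j = 1,…,i` is `e ⟨j⟩` for `j : Fin i`, and
`e_{i+k+1−j}` is `e ⟨i+k−1−j⟩`. -/
theorem reflection_formula_adapted_coordinates (n i k : ℕ) (hik : i ≤ k) (hkn : i + k ≤ n)
    (e : OrthonormalBasis (Fin n) ℝ (EuclideanSpace ℝ (Fin n)))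
    (α ρ θ : Fin i → ℝ)
    (H₁ H₂ : Submodule ℝ (EuclideanSpace ℝ (Fin n)))
    (hH₂ : H₂ = Submodule.span ℝ (Set.range fun j : Fin i =>
      cos (α j) • e ⟨j, by omega⟩ + sin (α j) • e ⟨i + k - 1 - j, by omega⟩))
    (y₁ y₂ x : EuclideanSpace ℝ (Fin n))
    (hy₁ : y₁ ∈ Submodule.span ℝ (Set.range fun j : Fin (k - i) => e ⟨i + j, by omega⟩))
    (hy₂ : y₂ ∈ (H₁ ⊔ H₂)ᗮ)
    (hx : x = (∑ j : Fin i, ρ j •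
        (cos (θ j) • e ⟨j, by omega⟩ + sin (θ j) • e ⟨i + k - 1 - j, by omega⟩)) + y₁ + y₂) :
    Submodule.reflection H₂ x = (∑ j : Fin i, ρ j •
        (cos (2 * α j - θ j) • e ⟨j, by omega⟩ +
          sin (2 * α j - θ j) • e ⟨i + k - 1 - j, by omega⟩)) - y₁ - y₂ := by
  let f : Fin i → Fin n := fun j => ⟨j, by omega⟩
  let g : Fin i → Fin n := fun j => ⟨i + k - 1 - j, by omega⟩
  have hf : Injective f := fun j j' h => Fin.ext (Fin.mk.inj_iff.mp h)
  have hg : Injective g := fun j j' h => Fin.ext (by have := Fin.mk.inj_iff.mp h; omega)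
  have hfg : ∀ j j', f j ≠ g j' := fun j j' h => by have := Fin.mk.inj_iff.mp h; omega
  have hy₁' : y₁ ∈ H₂ᗮ := by
    refine span_le.mpr ?_ hy₁
    rintro _ ⟨j, rfl⟩
    rw [hH₂]
    refine e.orthonormal.mem_orthogonal_span_of_notMem_range (f := f) (g := g) ?_ ?_ _ _
    · rintro ⟨j', h⟩; have := Fin.mk.inj_iff.mp h; omega
    · rintro ⟨j', h⟩; have := Fin.mk.inj_iff.mp h; omega
  have hy₂' : y₂ ∈ H₂ᗮ := orthogonal_le le_sup_right hy₂
  subst hH₂ hx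
  rw [add_assoc, sub_sub]
  exact reflection_sum_smul_cos_smul_add_sin_smul _ (fun j => subset_span (Set.mem_range_self j))
    (e.orthonormal.neg_sin_smul_add_cos_smul_mem_orthogonal_span hf hg hfg α) ρ θ
    (add_mem hy₁' hy₂')
end

section
/- (Symmetry extension lemma.) Let H and L be linear subspaces of R^n such that H ∩ L^⊥ = {0} and dim H < dim L. If E ⊆ S^{n−1} is nonempty, closed, invariant under the reflection R_H, and invariant under every element of O(n)_{L^⊥} (the orthogonal transformations fixing L^⊥ pointwise), then E is invariant under every element of O(n)_{(H+L)^⊥}. -/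
/-!
Write `W = H + L`, `P` for the orthogonal projection onto `Lᗮ` and `ψ = P ∘ R_H`. Invariance
under the stabiliser of `Lᗮ` means that a unit vector lies in `E` as soon as its projection lies
in the shadow `P E`. Because `dim H < dim L` there is a nonzero `z ∈ L ∩ R_H L`; sliding a vector
`y` of the unit ball along `z` onto the sphere changes neither `P y` nor `P (R_H y)`, so for
`d ∈ Lᗮ` in the unit ball, `d ∈ P E ↔ ψ d ∈ P E`.

On `Lᗮ = U ⊕ Wᗮ`, where `U = W ∩ Lᗮ`, the map `ψ` is `-1` on `Wᗮ` and, because `H ∩ Lᗮ = 0`,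
a strict contraction of `U`; hence `ψ^(2k) (u + p) → p`. As `P E` is closed it contains the
`Wᗮ`-component `p` of every point of `E`, and also `-p = ψ p`. Since `ψ` maps `L` onto `U`, the
points `ψ (a - p) = ψ a + p` with `a ∈ L` small fill a neighbourhood of `p` in `p + U`, and
pulling back along `ψ^(2k)` puts every `u + p` of the unit ball into `P E`. Thus `P E`, and with
it `E`, only depends on the `Wᗮ`-component, which an isometry fixing `Wᗮ` preserves.
-/

open Filter Topology Submodule

section General

theorem exists_norm_add_smul_eq {F : Type*} [NormedAddCommGroup F] [NormedSpace ℝ F] {y z : F}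
    (hz : z ≠ 0) {r : ℝ} (hy : ‖y‖ ≤ r) : ∃ t : ℝ, ‖y + t • z‖ = r := by
  set T := (r + ‖y‖) / ‖z‖
  have hT : 0 ≤ T := div_nonneg (by linarith [norm_nonneg y]) (norm_nonneg z)
  have hrT : r ≤ ‖y + T • z‖ := calc
    r = ‖T • z‖ - ‖y‖ := by
      rw [norm_smul, Real.norm_of_nonneg hT, div_mul_cancel₀ _ (norm_ne_zero_iff.2 hz)]; ring
    _ ≤ ‖y + T • z‖ := by
      have h := norm_sub_le (y + T • z) y
      rw [add_sub_cancel_left] at h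
      linarith
  have hcont : Continuous fun t : ℝ ↦ ‖y + t • z‖ := by fun_prop
  obtain ⟨t, -, ht⟩ := intermediate_value_Icc hT hcont.continuousOn ⟨by simpa using hy, hrT⟩
  exact ⟨t, ht⟩

variable {V : Type*} [NormedAddCommGroup V] [NormedSpace ℝ V] [FiniteDimensional ℝ V]

theorem exists_lt_one_norm_apply_le_mul {T : V →ₗ[ℝ] V} {K : Submodule ℝ V}
    (hT : ∀ x ∈ K, x ≠ 0 → ‖T x‖ < ‖x‖) :
    ∃ q, 0 ≤ q ∧ q < 1 ∧ ∀ x ∈ K, ‖T x‖ ≤ q * ‖x‖ := by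
  have hB : IsCompact ((K : Set V) ∩ Metric.closedBall 0 1) :=
    (isCompact_closedBall 0 1).inter_left K.closed_of_finiteDimensional
  obtain ⟨x₀, ⟨hx₀K, hx₀⟩, hmax⟩ :=
    hB.exists_isMaxOn ⟨0, K.zero_mem, by simp⟩
      T.continuous_of_finiteDimensional.norm.continuousOn
  refine ⟨‖T x₀‖, norm_nonneg _, ?_, fun x hx ↦ ?_⟩
  · rcases eq_or_ne x₀ 0 with rfl | h0
    · simp
    · exact (hT x₀ hx₀K h0).trans_le (mem_closedBall_zero_iff.1 hx₀)
  · rcases eq_or_ne x 0 with rfl | h0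
    · simp
    have hxn : 0 < ‖x‖ := norm_pos_iff.2 h0
    have h : ‖T (‖x‖⁻¹ • x)‖ ≤ ‖T x₀‖ :=
      hmax ⟨K.smul_mem ‖x‖⁻¹ hx, by simp [norm_smul, hxn.ne']⟩
    rw [map_smul, norm_smul, norm_inv, norm_norm] at h
    rwa [inv_mul_le_iff₀ hxn, mul_comm] at h

theorem tendsto_pow_apply_nhds_zero {T : V →ₗ[ℝ] V} {K : Submodule ℝ V}
    (hK : ∀ x ∈ K, T x ∈ K) (hT : ∀ x ∈ K, x ≠ 0 → ‖T x‖ < ‖x‖) {x : V} (hx : x ∈ K) :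
    Tendsto (fun k ↦ (T ^ k) x) atTop (𝓝 0) := by
  obtain ⟨q, hq0, hq1, hq⟩ := exists_lt_one_norm_apply_le_mul hT
  have hbound : ∀ k, ‖(T ^ k) x‖ ≤ q ^ k * ‖x‖ := by
    intro k
    induction k with
    | zero => simp
    | succ k ih =>
      rw [pow_succ', Module.End.mul_apply, pow_succ', mul_assoc]
      exact (hq _ (Module.End.pow_apply_mem_of_forall_mem k hK x hx)).trans
        (mul_le_mul_of_nonneg_left ih hq0)
  exact squeeze_zero_norm hbound
    (by simpa using (tendsto_pow_atTop_nhds_zero_of_lt_one hq0 hq1).mul_const ‖x‖)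

end General

section Stabilizer

variable {V : Type*} [NormedAddCommGroup V] [InnerProductSpace ℝ V]
  {K : Submodule ℝ V} [K.HasOrthogonalProjection]

theorem starProjection_apply_eq_of_forall_mem {g : V ≃ₗᵢ[ℝ] V} (hg : ∀ x ∈ K, g x = x)
    (x : V) : K.starProjection (g x) = K.starProjection x := by
  have hgx : g x - x ∈ Kᗮ := fun w hw ↦ by
    have h := g.inner_map_map w x
    rw [hg w hw] at h
    rw [inner_sub_right, h, sub_self]
  rw [← sub_add_cancel (g x) x, map_add, (starProjection_apply_eq_zero_iff K).2 hgx, zero_add]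

theorem mem_of_starProjection_eq {E : Set V}
    (hE : ∀ g : V ≃ₗᵢ[ℝ] V, (∀ x ∈ K, g x = x) → g '' E = E) {x y : V} (hy : y ∈ E)
    (hnorm : ‖x‖ = ‖y‖) (hproj : K.starProjection x = K.starProjection y) : x ∈ E := by
  have hyx : y - x ∈ Kᗮ := by
    rw [← starProjection_apply_eq_zero_iff K, map_sub, hproj, sub_self]
  have hfix : ∀ w ∈ K, (ℝ ∙ (y - x))ᗮ.reflection w = w := fun w hw ↦
    reflection_mem_subspace_eq_self
      (mem_orthogonal_singleton_iff_inner_right.2 (inner_left_of_mem_orthogonal hw hyx))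
  rw [← hE _ hfix]
  exact ⟨y, hy, reflection_sub hnorm.symm⟩

theorem reflection_mem_of_le {H M : Submodule ℝ V} [H.HasOrthogonalProjection] (hHM : H ≤ M)
    {y : V} (hy : y ∈ M) : H.reflection y ∈ M := by
  rw [reflection_apply]
  exact M.sub_mem (nsmul_mem (hHM (starProjection_apply_mem H y)) 2) hy

end Stabilizer

section ProjReflection

variable {V : Type*} [NormedAddCommGroup V] [InnerProductSpace ℝ V] [FiniteDimensional ℝ V]
  (H L : Submodule ℝ V)

noncomputable def projReflection : V →ₗ[ℝ] V :=
  Lᗮ.starProjection.toLinearMap ∘ₗ H.reflection.toLinearEquiv.toLinearMap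

theorem projReflection_apply (y : V) :
    projReflection H L y = Lᗮ.starProjection (H.reflection y) := rfl

variable {H L}

theorem projReflection_of_mem_orthogonal {p : V} (hp : p ∈ (H ⊔ L)ᗮ) :
    projReflection H L p = -p := by
  rw [projReflection_apply,
    reflection_mem_subspace_orthogonalComplement_eq_neg (orthogonal_le le_sup_left hp), map_neg,
    starProjection_eq_self_iff.2 (orthogonal_le le_sup_right hp)]

theorem projReflection_mem {y : V} (hy : y ∈ H ⊔ L) :
    projReflection H L y ∈ (H ⊔ L) ⊓ Lᗮ := by
  refine ⟨?_, starProjection_apply_mem _ _⟩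
  rw [projReflection_apply, starProjection_orthogonal_val]
  exact sub_mem (reflection_mem_of_le le_sup_left hy)
    (mem_sup_right (starProjection_apply_mem L _))

theorem norm_projReflection_le (y : V) : ‖projReflection H L y‖ ≤ ‖y‖ :=
  (norm_starProjection_apply_le _ _).trans_eq (H.reflection.norm_map y)

theorem eq_zero_of_reflection_mem_orthogonal (hHL : H ⊓ Lᗮ = ⊥) {u : V}
    (hu : u ∈ (H ⊔ L) ⊓ Lᗮ) (hR : H.reflection u ∈ Lᗮ) : u = 0 := by
  have hHu : H.starProjection u ∈ H ⊓ Lᗮ := by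
    refine ⟨starProjection_apply_mem H u, ?_⟩
    have h : H.starProjection u = (2 : ℝ)⁻¹ • (H.reflection u + u) := by
      rw [reflection_apply, sub_add_cancel, ← Nat.cast_smul_eq_nsmul ℝ, smul_smul]
      norm_num
    rw [h]
    exact Lᗮ.smul_mem _ (Lᗮ.add_mem hR hu.2)
  rw [hHL, Submodule.mem_bot, starProjection_apply_eq_zero_iff] at hHu
  have huW : u ∈ (H ⊔ L)ᗮ := inf_orthogonal H L ▸ ⟨hHu, hu.2⟩
  simpa using (inf_orthogonal_eq_bot (H ⊔ L)).le ⟨hu.1, huW⟩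

theorem norm_projReflection_lt (hHL : H ⊓ Lᗮ = ⊥) {u : V} (hu : u ∈ (H ⊔ L) ⊓ Lᗮ)
    (hu0 : u ≠ 0) : ‖projReflection H L u‖ < ‖u‖ := by
  rw [← H.reflection.norm_map u]
  exact (norm_starProjection_apply_le _ _).lt_of_ne fun h ↦
    hu0 (eq_zero_of_reflection_mem_orthogonal hHL hu ((mem_iff_norm_starProjection _ _).2 h))

theorem tendsto_pow_projReflection_nhds_zero (hHL : H ⊓ Lᗮ = ⊥) {u : V}
    (hu : u ∈ (H ⊔ L) ⊓ Lᗮ) : Tendsto (fun k ↦ (projReflection H L ^ k) u) atTop (𝓝 0) :=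
  tendsto_pow_apply_nhds_zero (fun _ hx ↦ projReflection_mem hx.1)
    (fun _ hx hx0 ↦ norm_projReflection_lt hHL hx hx0) hu

theorem map_projReflection (hHL : H ⊓ Lᗮ = ⊥) :
    L.map (projReflection H L) = (H ⊔ L) ⊓ Lᗮ := by
  have hle : L.map (projReflection H L) ≤ (H ⊔ L) ⊓ Lᗮ := by
    rintro _ ⟨a, ha, rfl⟩
    exact projReflection_mem (mem_sup_right ha)
  refine hle.antisymm ?_
  suffices (L.map (projReflection H L))ᗮ ⊓ ((H ⊔ L) ⊓ Lᗮ) = ⊥ by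
    rw [← sup_orthogonal_inf_of_hasOrthogonalProjection hle, this, sup_bot_eq]
  refine eq_bot_iff.2 fun w ⟨hw, hwU⟩ ↦ (Submodule.mem_bot ℝ).2 <|
    eq_zero_of_reflection_mem_orthogonal hHL hwU <| (mem_orthogonal _ _).2 fun a ha ↦ ?_
  have h := (mem_orthogonal _ _).1 hw _ ⟨a, ha, rfl⟩
  rwa [projReflection_apply, inner_starProjection_left_eq_right,
    starProjection_eq_self_iff.2 hwU.2, ← H.reflection.inner_map_map, reflection_reflection] at h

theorem exists_rightInverse_projReflection (hHL : H ⊓ Lᗮ = ⊥) :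
    ∃ σ : V →ₗ[ℝ] V, ∀ u ∈ (H ⊔ L) ⊓ Lᗮ, σ u ∈ L ∧ projReflection H L (σ u) = u := by
  set U := (H ⊔ L) ⊓ Lᗮ
  let f : L →ₗ[ℝ] U := (projReflection H L).restrict fun a ha ↦
    projReflection_mem (mem_sup_right ha)
  have hf : LinearMap.range f = ⊤ := by
    refine eq_top_iff.2 fun u _ ↦ ?_
    obtain ⟨a, ha, hau⟩ := (map_projReflection hHL).ge u.2
    exact ⟨⟨a, ha⟩, Subtype.ext hau⟩
  obtain ⟨g, hg⟩ := f.exists_rightInverse_of_surjective hf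
  refine ⟨L.subtype ∘ₗ g ∘ₗ (U.orthogonalProjectionOnto : V →ₗ[ℝ] U),
    fun u hu ↦ ⟨(g _).2, ?_⟩⟩
  have h := congr(($hg ⟨u, hu⟩ : V))
  simpa [orthogonalProjectionOnto_mem_subspace_eq_self ⟨u, hu⟩, f] using h

theorem exists_mem_reflection_mem (hdim : Module.finrank ℝ H < Module.finrank ℝ L) :
    ∃ z ∈ L, z ≠ 0 ∧ H.reflection z ∈ L := by
  set L' := L.map (H.reflection.toLinearEquiv : V →ₗ[ℝ] V)
  have hL' : L' ≤ H ⊔ L := by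
    rintro _ ⟨a, ha, rfl⟩
    exact reflection_mem_of_le le_sup_left (mem_sup_right ha)
  have h1 := finrank_sup_add_finrank_inf_eq L L'
  have h2 := finrank_mono (sup_le le_sup_right hL' : L ⊔ L' ≤ H ⊔ L)
  have h3 := finrank_add_le_finrank_add_finrank H L
  have h4 : Module.finrank ℝ L' = Module.finrank ℝ L := LinearEquiv.finrank_map_eq _ _
  obtain ⟨z, ⟨hzL, a, ha, rfl⟩, hz0⟩ :=
    exists_mem_ne_zero_of_ne_bot (one_le_finrank_iff.1 (by omega) : L ⊓ L' ≠ ⊥)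
  exact ⟨_, hzL, hz0, by simpa using ha⟩

theorem pow_two_mul_projReflection_of_mem_orthogonal {p : V} (hp : p ∈ (H ⊔ L)ᗮ) (k : ℕ) :
    (projReflection H L ^ (2 * k)) p = p := by
  induction k with
  | zero => simp
  | succ k ih =>
    rw [mul_add_one, pow_add, Module.End.mul_apply, sq, Module.End.mul_apply,
      projReflection_of_mem_orthogonal hp, map_neg, projReflection_of_mem_orthogonal hp, neg_neg,
      ih]

theorem starProjection_sub_starProjection_mem (y : V) :
    Lᗮ.starProjection y - (H ⊔ L)ᗮ.starProjection y ∈ (H ⊔ L) ⊓ Lᗮ := by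
  refine ⟨?_, sub_mem (starProjection_apply_mem _ _)
    (orthogonal_le le_sup_right (starProjection_apply_mem _ _))⟩
  rw [starProjection_orthogonal_val, starProjection_orthogonal_val, sub_sub_sub_cancel_left]
  exact sub_mem (starProjection_apply_mem _ _) (mem_sup_right (starProjection_apply_mem _ _))

end ProjReflection

section InvariantSphereSet

variable {V : Type*} [NormedAddCommGroup V] [InnerProductSpace ℝ V] [FiniteDimensional ℝ V]

structure IsInvariantSphereSet (H L : Submodule ℝ V) (E : Set V) : Prop where
  subset_sphere : E ⊆ Metric.sphere 0 1
  reflection_image_eq : H.reflection '' E = E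
  image_eq_of_forall_mem_orthogonal : ∀ g : V ≃ₗᵢ[ℝ] V, (∀ x ∈ Lᗮ, g x = x) → g '' E = E

namespace IsInvariantSphereSet

variable {H L : Submodule ℝ V} {E : Set V}

theorem norm_eq_one (hE : IsInvariantSphereSet H L E) {x : V} (hx : x ∈ E) : ‖x‖ = 1 :=
  mem_sphere_zero_iff_norm.1 (hE.subset_sphere hx)

theorem projReflection_mem_image (hE : IsInvariantSphereSet H L E)
    (hdim : Module.finrank ℝ H < Module.finrank ℝ L) {y : V} (hy : ‖y‖ ≤ 1)
    (hPy : Lᗮ.starProjection y ∈ Lᗮ.starProjection '' E) :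
    projReflection H L y ∈ Lᗮ.starProjection '' E := by
  obtain ⟨x, hxE, hxy⟩ := hPy
  obtain ⟨z, hzL, hz0, hRz⟩ := exists_mem_reflection_mem hdim
  obtain ⟨t, ht⟩ := exists_norm_add_smul_eq hz0 hy
  have hP : ∀ w ∈ L, Lᗮ.starProjection w = 0 := fun w hw ↦
    starProjection_orthogonal_apply_eq_zero hw
  have hyz : y + t • z ∈ E :=
    mem_of_starProjection_eq hE.image_eq_of_forall_mem_orthogonal hxE
      (by rw [ht, hE.norm_eq_one hxE])
      (by rw [map_add, map_smul, hP z hzL, smul_zero, add_zero, hxy])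
  refine ⟨H.reflection (y + t • z), hE.reflection_image_eq ▸ Set.mem_image_of_mem _ hyz, ?_⟩
  rw [map_add, map_smul, map_add, map_smul, hP _ hRz, smul_zero, add_zero, projReflection_apply]

theorem mem_image_iff_projReflection_mem (hE : IsInvariantSphereSet H L E)
    (hdim : Module.finrank ℝ H < Module.finrank ℝ L) {d : V} (hd : d ∈ Lᗮ) (hd1 : ‖d‖ ≤ 1) :
    d ∈ Lᗮ.starProjection '' E ↔ projReflection H L d ∈ Lᗮ.starProjection '' E := by
  refine ⟨fun h ↦ ?_, fun h ↦ ?_⟩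
  · exact hE.projReflection_mem_image hdim hd1 (by rwa [starProjection_eq_self_iff.2 hd])
  · have h' := hE.projReflection_mem_image hdim (y := H.reflection d)
      (by rwa [H.reflection.norm_map]) h
    rwa [projReflection_apply, reflection_reflection, starProjection_eq_self_iff.2 hd] at h'

theorem mem_image_iff_pow_projReflection_mem (hE : IsInvariantSphereSet H L E)
    (hdim : Module.finrank ℝ H < Module.finrank ℝ L) (k : ℕ) {d : V} (hd : d ∈ Lᗮ)
    (hd1 : ‖d‖ ≤ 1) :
    d ∈ Lᗮ.starProjection '' E ↔ (projReflection H L ^ k) d ∈ Lᗮ.starProjection '' E := by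
  induction k generalizing d with
  | zero => simp
  | succ k ih =>
    rw [pow_succ, Module.End.mul_apply, hE.mem_image_iff_projReflection_mem hdim hd hd1]
    exact ih (starProjection_apply_mem _ _) ((norm_projReflection_le d).trans hd1)

theorem starProjection_orthogonal_sup_mem_image (hE : IsInvariantSphereSet H L E)
    (hHL : H ⊓ Lᗮ = ⊥) (hdim : Module.finrank ℝ H < Module.finrank ℝ L) (hcl : IsClosed E)
    {x : V} (hx : x ∈ E) : (H ⊔ L)ᗮ.starProjection x ∈ Lᗮ.starProjection '' E := by
  have hclosed : IsClosed (Lᗮ.starProjection '' E) :=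
    (((isCompact_sphere 0 1).of_isClosed_subset hcl hE.subset_sphere).image
      (ContinuousLinearMap.continuous _)).isClosed
  have hlim : Tendsto (fun k ↦ (projReflection H L ^ (2 * k)) (Lᗮ.starProjection x)) atTop
      (𝓝 ((H ⊔ L)ᗮ.starProjection x)) := by
    have h := ((tendsto_pow_projReflection_nhds_zero hHL
      (starProjection_sub_starProjection_mem x)).comp
        (strictMono_mul_left_of_pos two_pos).tendsto_atTop).add_const ((H ⊔ L)ᗮ.starProjection x)
    rw [zero_add] at h
    refine h.congr fun k ↦ ?_
    rw [Function.comp_apply, map_sub,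
      pow_two_mul_projReflection_of_mem_orthogonal (starProjection_apply_mem _ x), sub_add_cancel]
  refine hclosed.mem_of_tendsto hlim (Eventually.of_forall fun k ↦ ?_)
  refine (hE.mem_image_iff_pow_projReflection_mem hdim _ (starProjection_apply_mem _ _) ?_).1
    ⟨x, hx, rfl⟩
  exact (norm_starProjection_apply_le _ _).trans (hE.norm_eq_one hx).le

theorem projReflection_add_mem_image (hE : IsInvariantSphereSet H L E)
    (hdim : Module.finrank ℝ H < Module.finrank ℝ L) {a p : V} (ha : a ∈ L)
    (hp : p ∈ (H ⊔ L)ᗮ) (hpE : -p ∈ Lᗮ.starProjection '' E) (hap : ‖a - p‖ ≤ 1) :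
    projReflection H L a + p ∈ Lᗮ.starProjection '' E := by
  have hP : Lᗮ.starProjection (a - p) = -p := by
    rw [map_sub, starProjection_orthogonal_apply_eq_zero ha,
      starProjection_eq_self_iff.2 (orthogonal_le le_sup_right hp), zero_sub]
  have h := hE.projReflection_mem_image hdim hap (hP ▸ hpE)
  rwa [map_sub, projReflection_of_mem_orthogonal hp, sub_neg_eq_add] at h

theorem add_mem_image (hE : IsInvariantSphereSet H L E) (hHL : H ⊓ Lᗮ = ⊥)
    (hdim : Module.finrank ℝ H < Module.finrank ℝ L) {u p : V} (hu : u ∈ (H ⊔ L) ⊓ Lᗮ)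
    (hp : p ∈ (H ⊔ L)ᗮ) (hpE : p ∈ Lᗮ.starProjection '' E) (hup : ‖u + p‖ ≤ 1) :
    u + p ∈ Lᗮ.starProjection '' E := by
  rcases eq_or_ne u 0 with rfl | hu0
  · simpa using hpE
  have hpL : p ∈ Lᗮ := orthogonal_le le_sup_right hp
  have hup' : ‖u‖ * ‖u‖ + ‖p‖ * ‖p‖ ≤ 1 := by
    rw [← norm_add_sq_eq_norm_sq_add_norm_sq_real (inner_right_of_mem_orthogonal hu.1 hp)]
    exact mul_le_one₀ hup (norm_nonneg _) hup
  have hnegp : -p ∈ Lᗮ.starProjection '' E := by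
    rw [← projReflection_of_mem_orthogonal hp]
    refine (hE.mem_image_iff_projReflection_mem hdim hpL ?_).1 hpE
    exact (mul_self_le_mul_self_iff (norm_nonneg p) zero_le_one).2
      (by nlinarith [mul_self_nonneg ‖u‖])
  obtain ⟨σ, hσ⟩ := exists_rightInverse_projReflection hHL
  have hσlim : Tendsto (fun k ↦ ‖σ ((projReflection H L ^ (2 * k)) u)‖) atTop (𝓝 0) := by
    have h := (tendsto_pow_projReflection_nhds_zero hHL hu).comp
      (strictMono_mul_left_of_pos two_pos).tendsto_atTop
    simpa [Function.comp_def] using (σ.continuous_of_finiteDimensional.tendsto 0).norm.comp h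
  obtain ⟨k, hk⟩ := (hσlim.eventually (gt_mem_nhds (norm_pos_iff.2 hu0))).exists
  set a := σ ((projReflection H L ^ (2 * k)) u)
  obtain ⟨haL, ha⟩ := hσ _ (Module.End.pow_apply_mem_of_forall_mem (2 * k)
    (fun _ hx ↦ projReflection_mem hx.1) u hu)
  have hap : ‖a - p‖ ≤ 1 := by
    refine (mul_self_le_mul_self_iff (norm_nonneg _) zero_le_one).2 ?_
    rw [norm_sub_sq_eq_norm_sq_add_norm_sq_real
      (inner_right_of_mem_orthogonal (mem_sup_right haL) hp)]
    nlinarith [mul_self_le_mul_self (norm_nonneg a) hk.le]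
  refine (hE.mem_image_iff_pow_projReflection_mem hdim (2 * k) (add_mem hu.2 hpL) hup).2 ?_
  rw [map_add, pow_two_mul_projReflection_of_mem_orthogonal hp, ← ha]
  exact hE.projReflection_add_mem_image hdim haL hp hnegp hap

theorem apply_mem (hE : IsInvariantSphereSet H L E) (hHL : H ⊓ Lᗮ = ⊥)
    (hdim : Module.finrank ℝ H < Module.finrank ℝ L) (hcl : IsClosed E) {g : V ≃ₗᵢ[ℝ] V}
    (hg : ∀ x ∈ (H ⊔ L)ᗮ, g x = x) {x : V} (hx : x ∈ E) : g x ∈ E := by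
  have hgx : (H ⊔ L)ᗮ.starProjection (g x) = (H ⊔ L)ᗮ.starProjection x :=
    starProjection_apply_eq_of_forall_mem hg x
  have hgx1 : ‖g x‖ = 1 := by rw [g.norm_map, hE.norm_eq_one hx]
  obtain ⟨y, hy, hyx⟩ : Lᗮ.starProjection (g x) ∈ Lᗮ.starProjection '' E := by
    have h := hE.add_mem_image hHL hdim (starProjection_sub_starProjection_mem (g x))
      (starProjection_apply_mem _ _)
      (hgx ▸ hE.starProjection_orthogonal_sup_mem_image hHL hdim hcl hx)
      (by rw [sub_add_cancel]; exact (norm_starProjection_apply_le _ _).trans hgx1.le)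
    rwa [sub_add_cancel] at h
  exact mem_of_starProjection_eq hE.image_eq_of_forall_mem_orthogonal hy
    (by rw [hgx1, hE.norm_eq_one hy]) hyx.symm

end IsInvariantSphereSet

end InvariantSphereSet

theorem symmetry_extension_lemma_general (n : ℕ)
    (H L : Submodule ℝ (EuclideanSpace ℝ (Fin n))) (h : H ⊓ Lᗮ = ⊥)
    (hdim : Module.finrank ℝ H < Module.finrank ℝ L)
    (E : Set (EuclideanSpace ℝ (Fin n))) (hcl : IsClosed E)
    (hsub : E ⊆ Metric.sphere 0 1)
    (hrefl : Submodule.reflection H '' E = E)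
    (hrot : ∀ g : EuclideanSpace ℝ (Fin n) ≃ₗᵢ[ℝ] EuclideanSpace ℝ (Fin n),
      (∀ x ∈ Lᗮ, g x = x) → g '' E = E) :
    ∀ g : EuclideanSpace ℝ (Fin n) ≃ₗᵢ[ℝ] EuclideanSpace ℝ (Fin n),
      (∀ x ∈ (H ⊔ L)ᗮ, g x = x) → g '' E = E := by
  have hE : IsInvariantSphereSet H L E := ⟨hsub, hrefl, hrot⟩
  intro g hg
  have hg' : ∀ x ∈ (H ⊔ L)ᗮ, g.symm x = x := fun x hx ↦ by
    rw [LinearIsometryEquiv.symm_apply_eq, hg x hx]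
  refine (Set.image_subset_iff.2 fun x hx ↦ hE.apply_mem h hdim hcl hg hx).antisymm fun x hx ↦
    ⟨g.symm x, hE.apply_mem h hdim hcl hg' hx, g.apply_symm_apply x⟩

/-- Symmetry extension lemma (Lemma 3.6): if `H ∩ L^⊥ = {0}`, `dim H < dim L`, and
`E ⊆ Sⁿ⁻¹` is nonempty, closed, invariant under the reflection `R_H` and under every
orthogonal transformation fixing `L^⊥` pointwise, then `E` is invariant under every
orthogonal transformation fixing `(H + L)^⊥` pointwise. -/
theorem symmetry_extension_lemma (n : ℕ)
    (H L : Submodule ℝ (EuclideanSpace ℝ (Fin n))) (h : H ⊓ Lᗮ = ⊥)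
    (hdim : Module.finrank ℝ H < Module.finrank ℝ L)
    (E : Set (EuclideanSpace ℝ (Fin n))) (hne : E.Nonempty) (hcl : IsClosed E)
    (hsub : E ⊆ Metric.sphere 0 1)
    (hrefl : Submodule.reflection H '' E = E)
    (hrot : ∀ g : EuclideanSpace ℝ (Fin n) ≃ₗᵢ[ℝ] EuclideanSpace ℝ (Fin n),
      (∀ x ∈ Lᗮ, g x = x) → g '' E = E) :
    ∀ g : EuclideanSpace ℝ (Fin n) ≃ₗᵢ[ℝ] EuclideanSpace ℝ (Fin n),
      (∀ x ∈ (H ⊔ L)ᗮ, g x = x) → g '' E = E :=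
  symmetry_extension_lemma_general n H L h hdim E hcl hsub hrefl hrot
end

section
/- Let H_1, …, H_k be subspaces of R^n with 1 ≤ dim H_j ≤ n−2 for each j, and suppose H_1^⊥ + ⋯ + H_k^⊥ = R^n and that {H_1^⊥, …, H_k^⊥} cannot be partitioned into two mutually orthogonal nonempty subsets. If E ⊆ S^{n−1} is nonempty, closed, and for each j = 1, …, k and each x ∈ E one has S^{n−1} ∩ (H_j^⊥ + x) ⊆ E, then E = S^{n−1}. -/
/-!
A closed set containing, with each point `x`, the section `{y | ‖y‖ = ‖x‖, y - x ∈ W}` of the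
sphere through `x` is invariant under every isometry that moves points along `W`. The key step is
that invariance along non-orthogonal `W₁, W₂` with `dim W₁ ≥ 2` gives invariance along `W₁ ⊔ W₂`.
On a compact invariant set, a maximiser `z` of `‖P_{W₁} z‖` has its `W₁ ⊔ W₂`-component in `W₁`:
otherwise the first-order conditions for rotations inside `W₂` at the `W₁`-rotates of `z`,
together with a half-turn in `W₂`, force `W₁ ⟂ W₂`. Orbit closures of the group generated by these
isometries are such sets, and they form a symmetric relation because the group acts isometrically;
so two points of the same `W₁ ⊔ W₂`-section are linked through points with component in `W₁`.
Starting from one `(H j)ᗮ` and absorbing a non-orthogonal `(H l)ᗮ` at each step, connectivity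
carries the invariance up to `⨆ j, (H j)ᗮ = ℝⁿ`.
-/

open Module Metric Set Submodule
open scoped RealInnerProductSpace

variable {X : Type*} [NormedAddCommGroup X] [InnerProductSpace ℝ X]

theorem eq_zero_of_norm_sub_le_of_norm_add_le {a b : X} (h₁ : ‖a - b‖ ≤ ‖a‖)
    (h₂ : ‖a + b‖ ≤ ‖a‖) : b = 0 := by
  have hpar := parallelogram_law_with_norm ℝ a b
  have h₁' := pow_le_pow_left₀ (norm_nonneg _) h₁ 2
  have h₂' := pow_le_pow_left₀ (norm_nonneg _) h₂ 2
  exact norm_eq_zero.1 (pow_eq_zero_iff two_ne_zero |>.1 (by nlinarith [sq_nonneg ‖b‖]))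

theorem norm_cos_smul_add_sin_smul {a b : X} (hab : ⟪a, b⟫ = 0) (hn : ‖b‖ = ‖a‖) (t : ℝ) :
    ‖Real.cos t • a + Real.sin t • b‖ = ‖a‖ := by
  rw [← sq_eq_sq₀ (norm_nonneg _) (norm_nonneg _), norm_add_sq_real, real_inner_smul_left,
    real_inner_smul_right, hab, norm_smul, norm_smul, hn, Real.norm_eq_abs, Real.norm_eq_abs]
  nlinarith [Real.sin_sq_add_cos_sq t, sq_abs (Real.sin t), sq_abs (Real.cos t)]

theorem inner_eq_zero_of_forall_norm_le (B c d : X)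
    (h : ∀ t : ℝ, ‖B + Real.cos t • c + Real.sin t • d‖ ≤ ‖B + c‖) : ⟪B + c, d⟫ = 0 := by
  have hF : HasDerivAt (fun t : ℝ => B + Real.cos t • c + Real.sin t • d) d 0 := by
    have := (((Real.hasDerivAt_cos 0).smul_const c).const_add B).add
      ((Real.hasDerivAt_sin 0).smul_const d)
    simpa [Pi.add_def] using this
  have hmax : IsLocalMax (fun t : ℝ => ‖B + Real.cos t • c + Real.sin t • d‖ ^ 2) 0 :=
    Filter.Eventually.of_forall fun t => by
      simpa using pow_le_pow_left₀ (norm_nonneg _) (h t) 2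
  simpa using hmax.hasDerivAt_eq_zero hF.norm_sq

theorem isOrtho_of_forall_norm_eq {W V : Submodule ℝ X} [V.HasOrthogonalProjection] {ρ : ℝ}
    (hρ : 0 < ρ) (h : ∀ w ∈ W, ‖w‖ = ρ → V.starProjection w = 0) : W ⟂ V := by
  rw [isOrtho_iff_le]
  intro w hw
  rcases eq_or_ne w 0 with rfl | hw0
  · exact zero_mem _
  have := h _ (W.smul_mem (ρ * ‖w‖⁻¹) hw) (norm_smul_inv_norm' hρ.le hw0)
  rw [map_smul, smul_eq_zero] at this
  exact (starProjection_apply_eq_zero_iff V).1 (this.resolve_left (by positivity))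

theorem starProjection_sub_starProjection_add {W : Submodule ℝ X} [W.HasOrthogonalProjection]
    (x : X) {v : X} (hv : v ∈ W) : W.starProjection (x - W.starProjection x + v) = v := by
  rw [map_add, map_sub, starProjection_eq_self_iff.2 (W.starProjection_apply_mem x),
    starProjection_eq_self_iff.2 hv, sub_self, zero_add]

theorem mem_of_mem_sup_of_sub_starProjection_mem {W₁ W₂ : Submodule ℝ X}
    [W₁.HasOrthogonalProjection] {d : X} (hd : d ∈ W₁ ⊔ W₂) (h : d - W₁.starProjection d ∈ W₂ᗮ) :
    d ∈ W₁ := by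
  have h₁ : d - W₁.starProjection d ∈ W₁ ⊔ W₂ :=
    sub_mem hd (mem_sup_left (W₁.starProjection_apply_mem d))
  have h₂ : d - W₁.starProjection d ∈ (W₁ ⊔ W₂)ᗮ := by
    rw [← inf_orthogonal]
    exact ⟨W₁.sub_starProjection_mem_orthogonal d, h⟩
  have := (W₁ ⊔ W₂).inf_orthogonal_eq_bot ▸ (Submodule.mem_inf.2 ⟨h₁, h₂⟩)
  rw [mem_bot, sub_eq_zero] at this
  exact this ▸ W₁.starProjection_apply_mem d

def SectionInvariant (W : Submodule ℝ X) (A : Set X) : Prop :=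
  ∀ x ∈ A, ∀ y, ‖y‖ = ‖x‖ → y - x ∈ W → y ∈ A

theorem SectionInvariant.sub_starProjection_add_mem {W : Submodule ℝ X} {A : Set X}
    [W.HasOrthogonalProjection] (h : SectionInvariant W A) {x v : X} (hx : x ∈ A) (hv : v ∈ W)
    (hn : ‖v‖ = ‖W.starProjection x‖) : x - W.starProjection x + v ∈ A := by
  refine h x hx _ ?_ (by rw [add_sub_right_comm, sub_sub_cancel_left, neg_add_eq_sub]
                         exact sub_mem hv (W.starProjection_apply_mem x))
  have hperp (w : X) (hw : w ∈ W) :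
      ‖x - W.starProjection x + w‖ ^ 2 = ‖x - W.starProjection x‖ ^ 2 + ‖w‖ ^ 2 := by
    rw [norm_add_sq_real, W.starProjection_inner_eq_zero x w hw]; ring
  have := hperp _ (W.starProjection_apply_mem x)
  rw [sub_add_cancel] at this
  rw [← sq_eq_sq₀ (norm_nonneg _) (norm_nonneg _), hperp v hv, hn, this]

def isometriesAlong (W : Submodule ℝ X) : Subgroup (X ≃ₗᵢ[ℝ] X) where
  carrier := {g | ∀ u, g u - u ∈ W}
  mul_mem' {g h} hg hh u := by simpa using add_mem (hg (h u)) (hh u)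
  one_mem' u := by simp
  inv_mem' {g} hg u := by simpa using neg_mem (hg (g.symm u))

theorem isometriesAlong_mono {W W' : Submodule ℝ X} (h : W ≤ W') :
    isometriesAlong W ≤ isometriesAlong W' :=
  fun _ hg u => h (hg u)

theorem reflection_mem_isometriesAlong {W : Submodule ℝ X} {d : X} (hd : d ∈ W) :
    (ℝ ∙ d)ᗮ.reflection ∈ isometriesAlong W := by
  intro u
  have : (ℝ ∙ d)ᗮ.reflection u - u = -(2 : ℝ) • (ℝ ∙ d).starProjection u := by
    rw [reflection_orthogonal_apply, Submodule.reflection_apply]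
    module
  rw [this]
  exact W.smul_mem _ ((span_singleton_le_iff_mem d W).2 hd ((ℝ ∙ d).starProjection_apply_mem u))

theorem sectionInvariant_iff_mapsTo {W : Submodule ℝ X} {A : Set X} :
    SectionInvariant W A ↔ ∀ g ∈ isometriesAlong W, MapsTo g A A := by
  refine ⟨fun h g hg x hx => h x hx (g x) (g.norm_map x) (hg x), fun h x hx y hn hy => ?_⟩
  have hg := reflection_mem_isometriesAlong (neg_mem hy)
  rw [neg_sub] at hg
  simpa [reflection_sub hn.symm] using h _ hg hx

theorem mapsTo_of_mem_sup {K₁ K₂ : Subgroup (X ≃ₗᵢ[ℝ] X)} {A : Set X}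
    (h₁ : ∀ g ∈ K₁, MapsTo g A A) (h₂ : ∀ g ∈ K₂, MapsTo g A A) {g : X ≃ₗᵢ[ℝ] X}
    (hg : g ∈ K₁ ⊔ K₂) : MapsTo g A A := by
  rw [Subgroup.sup_eq_closure] at hg
  induction hg using Subgroup.closure_induction'' with
  | mem g hg => exact hg.elim (h₁ g) (h₂ g)
  | inv_mem g hg => exact hg.elim (fun hg => h₁ _ (inv_mem hg)) (fun hg => h₂ _ (inv_mem hg))
  | one => exact mapsTo_id A
  | mul g h _ _ hg hh => exact hg.comp hh

def orbitClosure (G : Subgroup (X ≃ₗᵢ[ℝ] X)) (x : X) : Set X :=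
  closure {y | ∃ g ∈ G, g x = y}

namespace orbitClosure

variable {G : Subgroup (X ≃ₗᵢ[ℝ] X)} {x y z : X}

theorem self_mem : x ∈ orbitClosure G x :=
  subset_closure ⟨1, G.one_mem, rfl⟩

theorem subset {A : Set X} (hA : IsClosed A) (hG : ∀ g ∈ G, MapsTo g A A) (hx : x ∈ A) :
    orbitClosure G x ⊆ A :=
  closure_minimal (by rintro _ ⟨g, hg, rfl⟩; exact hG g hg hx) hA

theorem mapsTo {g : X ≃ₗᵢ[ℝ] X} (hg : g ∈ G) :
    MapsTo g (orbitClosure G x) (orbitClosure G x) :=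
  fun _ hz => map_mem_closure g.continuous hz
    (by rintro _ ⟨h, hh, rfl⟩; exact ⟨g * h, G.mul_mem hg hh, rfl⟩)

theorem subset_of_mem (hz : z ∈ orbitClosure G x) : orbitClosure G z ⊆ orbitClosure G x :=
  subset isClosed_closure (fun _ => mapsTo) hz

theorem symm (hy : y ∈ orbitClosure G x) : x ∈ orbitClosure G y := by
  rw [orbitClosure, Metric.mem_closure_iff] at hy ⊢
  intro ε hε
  obtain ⟨_, ⟨g, hg, rfl⟩, hd⟩ := hy ε hε
  refine ⟨g⁻¹ y, ⟨g⁻¹, G.inv_mem hg, rfl⟩, ?_⟩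
  rw [dist_comm]
  calc dist (g⁻¹ y) x = dist (g⁻¹ y) (g⁻¹ (g x)) := by simp [LinearIsometryEquiv.coe_inv]
    _ < ε := by rwa [g⁻¹.dist_map]

theorem norm_eq (hz : z ∈ orbitClosure G x) : ‖z‖ = ‖x‖ := by
  simpa using subset (A := sphere 0 ‖x‖) isClosed_sphere
    (fun g _ w hw => by simpa using hw) (by simp) hz

theorem sectionInvariant {W : Submodule ℝ X} (hG : isometriesAlong W ≤ G) :
    SectionInvariant W (orbitClosure G x) :=
  sectionInvariant_iff_mapsTo.2 fun _ hg => mapsTo (hG hg)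

variable [FiniteDimensional ℝ X]

theorem isCompact : IsCompact (orbitClosure G x) :=
  (isCompact_sphere 0 ‖x‖).of_isClosed_subset isClosed_closure
    fun _ hz => by simpa using norm_eq hz

theorem sub_mem {W : Submodule ℝ X} (hG : G ≤ isometriesAlong W) (hz : z ∈ orbitClosure G x) :
    z - x ∈ W := by
  refine subset (A := {z | z - x ∈ W}) ?_ (fun g hg w hw => ?_) (by simp) hz
  · exact W.closed_of_finiteDimensional.preimage (continuous_id.sub continuous_const)
  · simpa using W.add_mem (hG hg w) hw

end orbitClosure

variable [FiniteDimensional ℝ X]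

theorem exists_mem_norm_eq_inner_eq_zero {W : Submodule ℝ X} (hW : 2 ≤ finrank ℝ W) (m : X)
    {r : ℝ} (hr : 0 ≤ r) : ∃ v ∈ W, ‖v‖ = r ∧ ⟪m, v⟫ = 0 := by
  have hker : LinearMap.ker ((innerSL ℝ m).toLinearMap.comp W.subtype) ≠ ⊥ :=
    LinearMap.ker_ne_bot_of_finrank_lt (by rw [finrank_self]; omega)
  obtain ⟨v, hv, hv0⟩ := Submodule.exists_mem_ne_zero_of_ne_bot hker
  have hv0' : (v : X) ≠ 0 := by simpa using hv0
  refine ⟨(r * ‖(v : X)‖⁻¹) • v, W.smul_mem _ v.2, norm_smul_inv_norm' hr hv0', ?_⟩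
  simp only [LinearMap.mem_ker, LinearMap.coe_comp, Function.comp_apply, subtype_apply,
    ContinuousLinearMap.coe_coe, innerSL_apply_apply] at hv
  rw [real_inner_smul_right, hv, mul_zero]

section Maximizer

variable {W₁ W₂ : Submodule ℝ X} {C : Set X} {z : X}

local notation "P₁" => Submodule.starProjection W₁
local notation "P₂" => Submodule.starProjection W₂

theorem IsMaxOn.norm_starProjection_sub_add_le (h₂ : SectionInvariant W₂ C) (hzC : z ∈ C)
    (hz : IsMaxOn (‖P₁ ·‖) C z) {w : X} (hw : w ∈ W₂) (hn : ‖w‖ = ‖P₂ z‖) :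
    ‖P₁ z - P₁ (P₂ z) + P₁ w‖ ≤ ‖P₁ z‖ := by
  simpa only [map_add, map_sub] using isMaxOn_iff.1 hz _ (h₂.sub_starProjection_add_mem hzC hw hn)

theorem IsMaxOn.sub_starProjection_add (h₁ : SectionInvariant W₁ C) (hzC : z ∈ C)
    (hz : IsMaxOn (‖P₁ ·‖) C z) {v : X} (hv : v ∈ W₁) (hn : ‖v‖ = ‖P₁ z‖) :
    z - P₁ z + v ∈ C ∧ IsMaxOn (‖P₁ ·‖) C (z - P₁ z + v) := by
  refine ⟨h₁.sub_starProjection_add_mem hzC hv hn, isMaxOn_iff.2 fun y hy => ?_⟩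
  rw [starProjection_sub_starProjection_add z hv, hn]
  exact isMaxOn_iff.1 hz y hy

/-- First-order condition for rotating `P₂ z` inside `W₂` towards `e`. -/
theorem IsMaxOn.inner_starProjection_eq_zero (h₂ : SectionInvariant W₂ C) (hzC : z ∈ C)
    (hz : IsMaxOn (‖P₁ ·‖) C z) (hz₂ : P₂ z ≠ 0) {e : X} (he : e ∈ W₂)
    (heo : ⟪e, P₂ z⟫ = 0) : ⟪P₁ z, e⟫ = 0 := by
  rcases eq_or_ne e 0 with rfl | he0
  · exact inner_zero_right _
  set c := ‖P₂ z‖ * ‖e‖⁻¹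
  have hc : c ≠ 0 := by positivity
  have hrot (t : ℝ) : Real.cos t • P₂ z + Real.sin t • (c • e) ∈ W₂ :=
    add_mem (W₂.smul_mem _ (W₂.starProjection_apply_mem z)) (W₂.smul_mem _ (W₂.smul_mem _ he))
  have hnorm (t : ℝ) : ‖Real.cos t • P₂ z + Real.sin t • (c • e)‖ = ‖P₂ z‖ :=
    norm_cos_smul_add_sin_smul (by rw [real_inner_smul_right, real_inner_comm, heo, mul_zero])
      (norm_smul_inv_norm' (norm_nonneg _) he0) t
  have key := inner_eq_zero_of_forall_norm_le (P₁ z - P₁ (P₂ z)) (P₁ (P₂ z)) (P₁ (c • e))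
    fun t => by simpa only [map_add, map_smul, add_assoc, sub_add_cancel]
      using hz.norm_starProjection_sub_add_le h₂ hzC (hrot t) (hnorm t)
  rw [sub_add_cancel, ← inner_starProjection_left_eq_right,
    starProjection_eq_self_iff.2 (W₁.starProjection_apply_mem z), real_inner_smul_right] at key
  exact (mul_eq_zero.1 key).resolve_left hc

theorem IsMaxOn.isOrtho_of_starProjection_eq_zero (h₂ : SectionInvariant W₂ C) (hzC : z ∈ C)
    (hz : IsMaxOn (‖P₁ ·‖) C z) (h₁ : P₁ z = 0) (hz₂ : P₂ z ≠ 0) : W₂ ⟂ W₁ := by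
  have hmove : ∀ w ∈ W₂, ‖w‖ = ‖P₂ z‖ → P₁ w = P₁ (P₂ z) := fun w hw hn => by
    have := hz.norm_starProjection_sub_add_le h₂ hzC hw hn
    rwa [h₁, norm_zero, norm_le_zero_iff, zero_sub, neg_add_eq_zero, eq_comm] at this
  have hanti := hmove _ (neg_mem (W₂.starProjection_apply_mem z)) (norm_neg _)
  rw [map_neg, neg_eq_iff_add_eq_zero, ← two_smul ℝ, smul_eq_zero] at hanti
  refine isOrtho_of_forall_norm_eq (norm_pos_iff.2 hz₂) fun w hw hn => ?_
  rw [hmove w hw hn, hanti.resolve_left two_ne_zero]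

theorem IsMaxOn.starProjection_eq_zero_of_inner_eq_zero (h₁ : SectionInvariant W₁ C)
    (h₂ : SectionInvariant W₂ C) (hzC : z ∈ C) (hz : IsMaxOn (‖P₁ ·‖) C z)
    (hm : P₂ (z - P₁ z) ≠ 0) {v : X} (hv : v ∈ W₁) (hn : ‖v‖ = ‖P₁ z‖)
    (hmv : ⟪P₂ (z - P₁ z), v⟫ = 0) : P₂ v = 0 := by
  set m := P₂ (z - P₁ z)
  obtain ⟨hz'C, hz'⟩ := hz.sub_starProjection_add h₁ hzC hv hn
  have hP₁ : P₁ (z - P₁ z + v) = v := starProjection_sub_starProjection_add z hv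
  have hP₂ : P₂ (z - P₁ z + v) = m + P₂ v := map_add _ _ _
  have hmW : m ∈ W₂ := W₂.starProjection_apply_mem _
  have hmPv : ⟪m, P₂ v⟫ = 0 := by
    rwa [← inner_starProjection_left_eq_right, starProjection_eq_self_iff.2 hmW]
  have hne : m + P₂ v ≠ 0 := fun h => hm <| by
    simpa [inner_add_right, hmPv] using congrArg (⟪m, ·⟫) h
  -- `e` is orthogonal to `P₂ (z - P₁ z + v) = m + P₂ v`, but `⟪e, P₂ v⟫ = -‖m‖² ‖P₂ v‖²`.
  set e := ‖P₂ v‖ ^ 2 • m - ‖m‖ ^ 2 • P₂ v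
  have heW : e ∈ W₂ :=
    sub_mem (W₂.smul_mem _ hmW) (W₂.smul_mem _ (W₂.starProjection_apply_mem v))
  have heo : ⟪e, m + P₂ v⟫ = 0 := by
    simp only [e, inner_sub_left, inner_add_right, real_inner_smul_left,
      real_inner_self_eq_norm_sq, real_inner_comm m (P₂ v), hmPv]
    ring
  have key := hz'.inner_starProjection_eq_zero h₂ hz'C (hP₂ ▸ hne) heW (hP₂ ▸ heo)
  rw [hP₁, ← starProjection_eq_self_iff.2 heW, ← inner_starProjection_left_eq_right] at key
  simp only [e, inner_sub_right, real_inner_smul_right, real_inner_comm m (P₂ v), hmPv,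
    real_inner_self_eq_norm_sq] at key
  have : ‖m‖ ^ 2 * ‖P₂ v‖ ^ 2 = 0 := by linarith
  simpa [hm] using this

theorem IsMaxOn.isOrtho_of_norm_pos (h₁ : SectionInvariant W₁ C) (h₂ : SectionInvariant W₂ C)
    (hzC : z ∈ C) (hz : IsMaxOn (‖P₁ ·‖) C z) (hW₁ : 2 ≤ finrank ℝ W₁) (hr : 0 < ‖P₁ z‖)
    (hm : P₂ (z - P₁ z) ≠ 0) : W₁ ⟂ W₂ := by
  set m := P₂ (z - P₁ z)
  have hmW : m ∈ W₂ := W₂.starProjection_apply_mem _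
  have hhalfTurn : ∀ v ∈ W₁, ‖v‖ = ‖P₁ z‖ → P₂ v = 0 → ‖v - (2 : ℝ) • P₁ m‖ ≤ ‖v‖ := by
    intro v hv hn hv₂
    obtain ⟨hz'C, hz'⟩ := hz.sub_starProjection_add h₁ hzC hv hn
    have hP₂ : P₂ (z - P₁ z + v) = m := by rw [map_add, hv₂, add_zero]
    have := hz'.norm_starProjection_sub_add_le h₂ hz'C (neg_mem hmW) (by rw [norm_neg, hP₂])
    rw [hP₂, starProjection_sub_starProjection_add z hv, map_neg] at this
    convert this using 2
    module
  obtain ⟨v, hv, hn, hmv⟩ := exists_mem_norm_eq_inner_eq_zero hW₁ m hr.le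
  have hv₂ := hz.starProjection_eq_zero_of_inner_eq_zero h₁ h₂ hzC hm hv hn hmv
  have hPm : P₁ m = 0 := by
    have hneg := hhalfTurn (-v) (neg_mem hv) (by rwa [norm_neg]) (by rw [map_neg, hv₂, neg_zero])
    rw [← neg_add', norm_neg, norm_neg] at hneg
    exact (smul_eq_zero.1 (eq_zero_of_norm_sub_le_of_norm_add_le
      (hhalfTurn v hv hn hv₂) hneg)).resolve_left two_ne_zero
  refine isOrtho_of_forall_norm_eq hr fun v hv hn =>
    hz.starProjection_eq_zero_of_inner_eq_zero h₁ h₂ hzC hm hv hn ?_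
  rw [← starProjection_eq_self_iff.2 hv, ← inner_starProjection_left_eq_right, hPm,
    inner_zero_left]

theorem exists_sub_starProjection_mem_orthogonal (hC : IsCompact C) (hne : C.Nonempty)
    (h₁ : SectionInvariant W₁ C) (h₂ : SectionInvariant W₂ C) (hW₁ : 2 ≤ finrank ℝ W₁)
    (hno : ¬ W₁ ⟂ W₂) : ∃ z ∈ C, z - P₁ z ∈ W₂ᗮ := by
  obtain ⟨z, hzC, hz⟩ := hC.exists_isMaxOn hne
    (continuous_norm.comp W₁.starProjection.continuous).continuousOn
  refine ⟨z, hzC, (starProjection_apply_eq_zero_iff W₂).1 (by_contra fun hm => hno ?_)⟩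
  rcases (norm_nonneg (P₁ z)).eq_or_lt with hr | hr
  · have h0 : P₁ z = 0 := norm_eq_zero.1 hr.symm
    rw [h0, sub_zero] at hm
    exact (hz.isOrtho_of_starProjection_eq_zero h₂ hzC h0 hm).symm
  · exact hz.isOrtho_of_norm_pos h₁ h₂ hzC hW₁ hr hm

end Maximizer

theorem SectionInvariant.sup {W₁ W₂ : Submodule ℝ X} {A : Set X} (hA : IsClosed A)
    (hW₁ : 2 ≤ finrank ℝ W₁) (hno : ¬ W₁ ⟂ W₂) (h₁ : SectionInvariant W₁ A)
    (h₂ : SectionInvariant W₂ A) : SectionInvariant (W₁ ⊔ W₂) A := by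
  set G := isometriesAlong W₁ ⊔ isometriesAlong W₂
  have hGA : ∀ g ∈ G, MapsTo g A A := fun _ =>
    mapsTo_of_mem_sup (sectionInvariant_iff_mapsTo.1 h₁) (sectionInvariant_iff_mapsTo.1 h₂)
  have hGU : G ≤ isometriesAlong (W₁ ⊔ W₂) :=
    sup_le (isometriesAlong_mono le_sup_left) (isometriesAlong_mono le_sup_right)
  have hbase (x : X) : ∃ z ∈ orbitClosure G x, z - W₁.starProjection z ∈ W₂ᗮ :=
    exists_sub_starProjection_mem_orthogonal orbitClosure.isCompact ⟨x, orbitClosure.self_mem⟩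
      (orbitClosure.sectionInvariant le_sup_left) (orbitClosure.sectionInvariant le_sup_right)
      hW₁ hno
  intro x hx y hn hy
  obtain ⟨z₁, hz₁, hz₁W⟩ := hbase x
  obtain ⟨z₂, hz₂, hz₂W⟩ := hbase y
  have hz : z₂ - z₁ ∈ W₁ := by
    refine mem_of_mem_sup_of_sub_starProjection_mem (W₂ := W₂) ?_ ?_
    · simpa using add_mem (add_mem (orbitClosure.sub_mem hGU hz₂) hy)
        (neg_mem (orbitClosure.sub_mem hGU hz₁))
    · simpa [map_sub, sub_sub_sub_comm] using sub_mem hz₂W hz₁W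
  have hz₂x : z₂ ∈ orbitClosure G x :=
    orbitClosure.sectionInvariant le_sup_left z₁ hz₁ z₂
      (by rw [orbitClosure.norm_eq hz₂, orbitClosure.norm_eq hz₁, hn]) hz
  exact orbitClosure.subset hA hGA hx (orbitClosure.subset_of_mem hz₂x (orbitClosure.symm hz₂))

theorem SectionInvariant.top_of_iSup_eq_top {ι : Type*} {W : ι → Submodule ℝ X} {A : Set X}
    (hA : IsClosed A) (hdim : ∀ j, 2 ≤ finrank ℝ (W j)) (htop : ⨆ j, W j = ⊤)
    (hconn : ∀ I : Set ι, I.Nonempty → Iᶜ.Nonempty → ∃ j ∈ I, ∃ l ∈ Iᶜ, ¬ W j ⟂ W l)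
    (hW : ∀ j, SectionInvariant (W j) A) : SectionInvariant ⊤ A := by
  rcases isEmpty_or_nonempty ι with hι | ⟨⟨j₀⟩⟩
  · rw [← htop, iSup_of_empty]
    intro x hx y _ hy
    rw [mem_bot, sub_eq_zero] at hy
    rwa [hy]
  refine (WellFoundedGT.induction_top (P := fun V => (∃ j, W j ≤ V) ∧ SectionInvariant V A)
    ⟨W j₀, ⟨j₀, le_rfl⟩, hW j₀⟩ ?_).2
  rintro V hV ⟨⟨j₁, hj₁⟩, hVA⟩
  have hout : {j | W j ≤ V}ᶜ.Nonempty := Set.nonempty_compl.2 fun h =>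
    hV (eq_top_iff.2 (htop ▸ iSup_le (Set.eq_univ_iff_forall.1 h)))
  obtain ⟨j, hj, l, hl, hjl⟩ := hconn _ ⟨j₁, hj₁⟩ hout
  refine ⟨V ⊔ W l, lt_of_le_of_ne le_sup_left fun h => hl (left_eq_sup.1 h), ⟨l, le_sup_right⟩,
    hVA.sup hA ((hdim j₁).trans (Submodule.finrank_mono hj₁)) (fun h => hjl (h.mono_left hj))
      (hW l)⟩

/-- Theorem 4.1, (i) ⇒ (ii): if `H₁^⊥ + ⋯ + H_k^⊥ = ℝⁿ` and the family `{H_j^⊥}` cannot be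
split into two mutually orthogonal nonempty subfamilies, then any nonempty closed subset `E`
of the sphere containing, with each of its points `x`, the whole section
`Sⁿ⁻¹ ∩ (H_j^⊥ + x)` for every `j`, is the whole sphere. -/
theorem full_sphere_of_rotational_symmetries (n k : ℕ)
    (H : Fin k → Submodule ℝ (EuclideanSpace ℝ (Fin n)))
    (hdim : ∀ j, 1 ≤ Module.finrank ℝ (H j) ∧ Module.finrank ℝ (H j) ≤ n - 2)
    (hspan : ⨆ j, (H j)ᗮ = ⊤)
    (hpart : ¬ ∃ I : Set (Fin k), I.Nonempty ∧ Iᶜ.Nonempty ∧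
      ∀ j ∈ I, ∀ l ∈ Iᶜ, ∀ u ∈ (H j)ᗮ, ∀ v ∈ (H l)ᗮ, (inner ℝ u v : ℝ) = 0)
    (E : Set (EuclideanSpace ℝ (Fin n))) (hne : E.Nonempty) (hcl : IsClosed E)
    (hsub : E ⊆ Metric.sphere 0 1)
    (hsec : ∀ j, ∀ x ∈ E, ∀ y ∈ Metric.sphere (0 : EuclideanSpace ℝ (Fin n)) 1,
      y - x ∈ (H j)ᗮ → y ∈ E) :
    E = Metric.sphere 0 1 := by
  have hdim' : ∀ j, 2 ≤ finrank ℝ (H j)ᗮ := fun j => by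
    have := (H j).finrank_add_finrank_orthogonal
    rw [finrank_euclideanSpace_fin] at this
    have := hdim j
    omega
  have hconn : ∀ I : Set (Fin k), I.Nonempty → Iᶜ.Nonempty →
      ∃ j ∈ I, ∃ l ∈ Iᶜ, ¬ (H j)ᗮ ⟂ (H l)ᗮ := fun I hI hIc => by
    by_contra! h
    exact hpart ⟨I, hI, hIc, fun j hj l hl => isOrtho_iff_inner_eq.1 (h j hj l hl)⟩
  have hinv (j : Fin k) : SectionInvariant (H j)ᗮ E := fun x hx y hn hy =>
    hsec j x hx y (by simpa [hn] using hsub hx) hy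
  have htop := SectionInvariant.top_of_iSup_eq_top hcl hdim' hspan hconn hinv
  obtain ⟨x₀, hx₀⟩ := hne
  refine hsub.antisymm fun y hy => htop x₀ hx₀ y ?_ trivial
  rw [mem_sphere_zero_iff_norm.1 hy, mem_sphere_zero_iff_norm.1 (hsub hx₀)]
end

section
/- Let n ≥ 3 and let H_1, H_2 be distinct 1-dimensional subspaces of R^n. If F ⊆ R^n is closed and invariant under every rotation of R^n that fixes H_1 pointwise and under every rotation that fixes H_2 pointwise, then F is a union of spheres centered at the origin (i.e., F is invariant under the whole group O(n)). -/
/-!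
For `n ≥ 3` the rotations fixing a unit vector `u` act transitively on every parallel
`{z | ‖z‖ = r ∧ ⟪u, z⟫ = c}` (products of two reflections suffice), so `F` is a union of
parallels for both axes `u` and `v = α • u + β • m`, where `m ⊥ u` and `β ≠ 0`. On a sphere
of radius `r` meeting `F`, the set of `u`-latitudes whose parallel lies in `F` is closed, and
from latitude `c` a parallel of the axis `v` leads to every latitude in
`[c, c + β² (r - c) / (α² + β²)]`. Continuous induction then gives all latitudes from that of a
point of `F` up to `r`, and the same argument for the axis `-u` all latitudes down to `-r`.
-/

open Module Set Filter Topology RealInnerProductSpace Submodule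

theorem exists_norm_eq_one_eq_span_singleton {V : Type*} [NormedAddCommGroup V]
    [NormedSpace ℝ V] {H : Submodule ℝ V} (hH : finrank ℝ H = 1) :
    ∃ u : V, ‖u‖ = 1 ∧ H = ℝ ∙ u := by
  obtain ⟨w, hw, hw0⟩ := exists_mem_ne_zero_of_ne_bot (p := H) <| by
    rintro rfl; simp at hH
  exact ⟨‖w‖⁻¹ • w, norm_smul_inv_norm hw0,
    eq_span_singleton_of_mem_of_finrank_eq_one hH (H.smul_mem _ hw) (by simpa using hw0)⟩

variable {E : Type*} [NormedAddCommGroup E] [InnerProductSpace ℝ E]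

theorem exists_ne_zero_inner_eq_zero_inner_eq_zero [FiniteDimensional ℝ E]
    (hE : 2 < finrank ℝ E) (a b : E) : ∃ w ≠ 0, ⟪a, w⟫ = 0 ∧ ⟪b, w⟫ = 0 := by
  classical
  have hne : (span ℝ {a, b})ᗮ ≠ ⊥ := by
    rw [Ne, orthogonal_eq_bot_iff]
    intro htop
    have hle := finrank_span_finset_le_card (R := ℝ) ({a, b} : Finset E)
    rw [Finset.coe_pair, Set.finrank, htop, finrank_top] at hle
    have := Finset.card_le_two (a := a) (b := b)
    omega
  obtain ⟨w, hw, hw0⟩ := exists_mem_ne_zero_of_ne_bot hne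
  exact ⟨w, hw0, inner_right_of_mem_orthogonal (subset_span (by simp)) hw,
    inner_right_of_mem_orthogonal (subset_span (by simp)) hw⟩

theorem det_reflection_orthogonal_span_singleton [FiniteDimensional ℝ E] {v : E} (hv : v ≠ 0) :
    LinearMap.det (reflection (ℝ ∙ v)ᗮ).toLinearMap = -1 := by
  rw [det_reflection, orthogonal_orthogonal, finrank_span_singleton hv, pow_one]

theorem exists_rotation_fixing_of_norm_eq_of_inner_eq [FiniteDimensional ℝ E]
    (hE : 2 < finrank ℝ E) {u p q : E} (hpq : ‖p‖ = ‖q‖) (hu : ⟪u, p⟫ = ⟪u, q⟫) :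
    ∃ g : E ≃ₗᵢ[ℝ] E, LinearMap.det (g.toLinearEquiv : E →ₗ[ℝ] E) = 1 ∧ g u = u ∧ g p = q := by
  rcases eq_or_ne p q with rfl | hne
  · exact ⟨.refl ℝ E, LinearMap.det_id, rfl, rfl⟩
  obtain ⟨w, hw0, hwu, hwq⟩ := exists_ne_zero_inner_eq_zero_inner_eq_zero hE u q
  have hu_perp : u ∈ (ℝ ∙ (p - q))ᗮ := by
    rw [mem_orthogonal_singleton_iff_inner_left, inner_sub_right, hu, sub_self]
  -- the second reflection fixes `u` and `q` and restores the determinant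
  refine ⟨(reflection (ℝ ∙ (p - q))ᗮ).trans (reflection (ℝ ∙ w)ᗮ), ?_, ?_, ?_⟩
  · change LinearMap.det ((reflection (ℝ ∙ w)ᗮ).toLinearMap ∘ₗ
      (reflection (ℝ ∙ (p - q))ᗮ).toLinearMap) = 1
    rw [LinearMap.det_comp, det_reflection_orthogonal_span_singleton hw0,
      det_reflection_orthogonal_span_singleton (sub_ne_zero.mpr hne)]
    norm_num
  · rw [LinearIsometryEquiv.trans_apply, reflection_mem_subspace_eq_self hu_perp,
      reflection_mem_subspace_eq_self (mem_orthogonal_singleton_iff_inner_left.mpr hwu)]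
  · rw [LinearIsometryEquiv.trans_apply, reflection_sub hpq,
      reflection_mem_subspace_eq_self (mem_orthogonal_singleton_iff_inner_left.mpr hwq)]

/-- The parallels of the axis `u` are the sets `{z | ‖z‖ = r ∧ ⟪u, z⟫ = c}`. -/
def IsUnionOfParallels (u : E) (F : Set E) : Prop :=
  ∀ ⦃z z' : E⦄, z ∈ F → ‖z'‖ = ‖z‖ → ⟪u, z'⟫ = ⟪u, z⟫ → z' ∈ F

theorem isUnionOfParallels_of_rotation_invariant [FiniteDimensional ℝ E] (hE : 2 < finrank ℝ E)
    {H : Submodule ℝ E} {u : E} (hH : H ≤ ℝ ∙ u) {F : Set E}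
    (hF : ∀ g : E ≃ₗᵢ[ℝ] E, LinearMap.det (g.toLinearEquiv : E →ₗ[ℝ] E) = 1 →
      (∀ x ∈ H, g x = x) → g '' F = F) :
    IsUnionOfParallels u F := by
  intro z z' hz hnorm hinner
  obtain ⟨g, hdet, hgu, hgz⟩ :=
    exists_rotation_fixing_of_norm_eq_of_inner_eq hE hnorm.symm hinner.symm
  have hfix : ∀ x ∈ H, g x = x := fun x hx => by
    obtain ⟨c, rfl⟩ := mem_span_singleton.mp (hH hx)
    rw [map_smul, hgu]
  rw [← hF g hdet hfix]
  exact ⟨z, hz, hgz⟩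

theorem IsUnionOfParallels.neg {u : E} {F : Set E} (hF : IsUnionOfParallels u F) :
    IsUnionOfParallels (-u) F := fun _ _ hz hnorm hinner =>
  hF hz hnorm (by simpa only [inner_neg_left, neg_inj] using hinner)

theorem orthonormal_vec3_iff {u m e : E} :
    Orthonormal ℝ ![u, m, e] ↔
      ‖u‖ = 1 ∧ ‖m‖ = 1 ∧ ‖e‖ = 1 ∧ ⟪u, m⟫ = 0 ∧ ⟪u, e⟫ = 0 ∧ ⟪m, e⟫ = 0 := by
  simp only [orthonormal_vecCons_iff, Fin.forall_fin_two, Fin.forall_fin_one]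
  simp
  tauto

theorem exists_orthonormal_of_notMem_span_singleton [FiniteDimensional ℝ E]
    (hE : 2 < finrank ℝ E) {u v : E} (hu : ‖u‖ = 1) (hv : v ∉ ℝ ∙ u) :
    ∃ m e : E, ∃ α β : ℝ, Orthonormal ℝ ![u, m, e] ∧ β ≠ 0 ∧ v = α • u + β • m := by
  set w := v - ⟪u, v⟫ • u
  have hw0 : w ≠ 0 := fun h => hv (mem_span_singleton.mpr ⟨⟪u, v⟫, (sub_eq_zero.mp h).symm⟩)
  have huw : ⟪u, w⟫ = 0 := by
    rw [inner_sub_right, real_inner_smul_right, real_inner_self_eq_norm_sq, hu]; ring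
  obtain ⟨e, he0, hue, hwe⟩ := exists_ne_zero_inner_eq_zero_inner_eq_zero hE u w
  refine ⟨‖w‖⁻¹ • w, ‖e‖⁻¹ • e, ⟪u, v⟫, ‖w‖, ?_, norm_ne_zero_iff.mpr hw0, ?_⟩
  · have hm : ‖‖w‖⁻¹ • w‖ = 1 := norm_smul_inv_norm hw0
    have he : ‖‖e‖⁻¹ • e‖ = 1 := norm_smul_inv_norm he0
    refine orthonormal_vec3_iff.mpr ⟨hu, hm, he, ?_, ?_, ?_⟩ <;>
      simp [real_inner_smul_left, real_inner_smul_right, huw, hue, hwe]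
  · rw [smul_inv_smul₀ (norm_ne_zero_iff.mpr hw0)]
    exact (add_sub_cancel _ _).symm

noncomputable def spherePoint (u m e : E) (r a b : ℝ) : E :=
  a • u + b • m + √(r ^ 2 - a ^ 2 - b ^ 2) • e

section spherePoint

variable {u m e : E} {r a b : ℝ}

theorem inner_spherePoint_fst (h : Orthonormal ℝ ![u, m, e]) :
    ⟪u, spherePoint u m e r a b⟫ = a := by
  obtain ⟨hu, -, -, hum, hue, -⟩ := orthonormal_vec3_iff.mp h
  simp [spherePoint, inner_add_right, real_inner_smul_right, hu, hum, hue]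

theorem inner_spherePoint_snd (h : Orthonormal ℝ ![u, m, e]) :
    ⟪m, spherePoint u m e r a b⟫ = b := by
  obtain ⟨-, hm, -, hum, -, hme⟩ := orthonormal_vec3_iff.mp h
  simp [spherePoint, inner_add_right, real_inner_smul_right, hm,
    real_inner_comm u m, hum, hme]

theorem norm_spherePoint (h : Orthonormal ℝ ![u, m, e]) (hab : a ^ 2 + b ^ 2 ≤ r ^ 2) :
    ‖spherePoint u m e r a b‖ = |r| := by
  obtain ⟨hu, hm, he, hum, hue, hme⟩ := orthonormal_vec3_iff.mp h
  have hsq : ‖spherePoint u m e r a b‖ ^ 2 = r ^ 2 := by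
    rw [← real_inner_self_eq_norm_sq]
    simp only [spherePoint, inner_add_left, inner_add_right, real_inner_smul_left,
      real_inner_smul_right, real_inner_self_eq_norm_sq, hum, hue, hme,
      real_inner_comm u m, real_inner_comm u e, real_inner_comm m e]
    simp only [norm_smul, Real.norm_eq_abs, sq_abs, hu, hm, he, mul_one,
      mul_zero, add_zero, zero_add]
    rw [Real.sq_sqrt (by linarith)]
    ring
  rw [← abs_norm]
  exact (sq_eq_sq_iff_abs_eq_abs _ _).mp hsq

theorem spherePoint_neg_fst : spherePoint (-u) m e r a b = spherePoint u m e r (-a) b := by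
  simp [spherePoint]

end spherePoint

namespace IsUnionOfParallels

variable {u m e : E} {F : Set E} {α β : ℝ}

theorem spherePoint_add_mem (h : Orthonormal ℝ ![u, m, e]) (hβ : β ≠ 0)
    (hu : IsUnionOfParallels u F) (hv : IsUnionOfParallels (α • u + β • m) F) {r c δ : ℝ}
    (hc : -r ≤ c) (hδ : 0 ≤ δ) (hδr : δ * (α ^ 2 + β ^ 2) ≤ β ^ 2 * (r - c))
    (hcF : spherePoint u m e r c 0 ∈ F) : spherePoint u m e r (c + δ) 0 ∈ F := by
  have hβ2 : 0 < β ^ 2 := by positivity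
  have hδc : δ ≤ r - c := by nlinarith [sq_nonneg α]
  set a := -(α * δ / β)
  have hcr : c ^ 2 + 0 ^ 2 ≤ r ^ 2 := by nlinarith
  have hc'r : (c + δ) ^ 2 + a ^ 2 ≤ r ^ 2 := by
    have ha : β ^ 2 * a ^ 2 = α ^ 2 * δ ^ 2 := by simp only [a]; field_simp
    refine le_of_mul_le_mul_left ?_ hβ2
    rw [mul_add, ha]
    nlinarith [mul_le_mul_of_nonneg_left hδr hδ,
      mul_le_mul_of_nonneg_left hδc (by nlinarith : 0 ≤ β ^ 2 * (r + c))]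
  have hc'r₀ : (c + δ) ^ 2 + 0 ^ 2 ≤ r ^ 2 := by nlinarith
  -- `a` is chosen so that the tilted point keeps the `v`-latitude of the starting point
  have hmid : spherePoint u m e r (c + δ) a ∈ F := by
    refine hv hcF ?_ ?_
    · rw [norm_spherePoint h hc'r, norm_spherePoint h hcr]
    · simp only [inner_add_left, real_inner_smul_left, inner_spherePoint_fst h,
        inner_spherePoint_snd h, a]
      field_simp
      ring
  refine hu hmid ?_ ?_
  · rw [norm_spherePoint h hc'r, norm_spherePoint h hc'r₀]
  · rw [inner_spherePoint_fst h, inner_spherePoint_fst h]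

theorem spherePoint_mem_of_mem_of_le (h : Orthonormal ℝ ![u, m, e]) (hβ : β ≠ 0)
    (hF : IsClosed F) (hu : IsUnionOfParallels u F) (hv : IsUnionOfParallels (α • u + β • m) F)
    {r c₀ : ℝ} (hc₀ : -r ≤ c₀) (h₀ : spherePoint u m e r c₀ 0 ∈ F) :
    ∀ c ∈ Icc c₀ r, spherePoint u m e r c 0 ∈ F := by
  have hcont : Continuous fun c => spherePoint u m e r c 0 := by
    unfold spherePoint; fun_prop
  refine IsClosed.Icc_subset_of_forall_mem_nhdsWithin ((hF.preimage hcont).inter isClosed_Icc)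
    h₀ fun c ⟨hcF, hc₀c, hcr⟩ => ?_
  have hpos : 0 < β ^ 2 * (r - c) / (α ^ 2 + β ^ 2) := by
    have : 0 < r - c := sub_pos.mpr hcr
    positivity
  filter_upwards [Ioc_mem_nhdsGT (lt_add_of_pos_right c hpos)] with c' hc'
  have hstep := spherePoint_add_mem h hβ hu hv (hc₀.trans hc₀c) (sub_nonneg.mpr hc'.1.le)
    (by rw [← le_div_iff₀ (by positivity)]; linarith [hc'.2]) hcF
  rwa [add_sub_cancel] at hstep

theorem mem_of_norm_eq (h : Orthonormal ℝ ![u, m, e]) (hβ : β ≠ 0) (hF : IsClosed F)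
    (hu : IsUnionOfParallels u F) (hv : IsUnionOfParallels (α • u + β • m) F)
    {x y : E} (hx : x ∈ F) (hy : ‖y‖ = ‖x‖) : y ∈ F := by
  set r := ‖x‖
  have hr : |r| = r := abs_norm x
  have hlat : ∀ z : E, |⟪u, z⟫| ≤ ‖z‖ := fun z => by
    simpa [(orthonormal_vec3_iff.mp h).1] using abs_real_inner_le_norm u z
  have hsq : ∀ z : E, ‖z‖ = r → ⟪u, z⟫ ^ 2 + 0 ^ 2 ≤ r ^ 2 := fun z hz => by
    rw [← hz, zero_pow two_ne_zero, add_zero, ← sq_abs]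
    exact pow_le_pow_left₀ (abs_nonneg _) (hlat z) 2
  have hstart : spherePoint u m e r ⟪u, x⟫ 0 ∈ F :=
    hu hx (by rw [norm_spherePoint h (hsq x rfl), hr]) (inner_spherePoint_fst h)
  have hpole : spherePoint u m e r r 0 ∈ F :=
    spherePoint_mem_of_mem_of_le h hβ hF hu hv (abs_le.mp (hlat x)).1 hstart r
      ⟨(abs_le.mp (hlat x)).2, le_rfl⟩
  -- descending from the pole along `u` is ascending along `-u`, an axis of the same parallels
  have hall : ∀ c ∈ Icc (-r) r, spherePoint u m e r c 0 ∈ F := by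
    have h' : Orthonormal ℝ ![-u, m, e] := by
      simpa [orthonormal_vec3_iff, inner_neg_left] using h
    have hv' : IsUnionOfParallels ((-α) • -u + β • m) F := by rwa [neg_smul_neg]
    intro c hc
    have hc' := spherePoint_mem_of_mem_of_le h' hβ hF hu.neg hv' le_rfl
      (by rwa [spherePoint_neg_fst, neg_neg]) (-c) ⟨neg_le_neg hc.2, neg_le.mpr hc.1⟩
    rwa [spherePoint_neg_fst, neg_neg] at hc'
  refine hu (hall ⟪u, y⟫ (abs_le.mp (hy ▸ hlat y))) ?_ (inner_spherePoint_fst h).symm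
  rw [hy, norm_spherePoint h (hsq y hy), hr]

end IsUnionOfParallels

/-- Corollary 4.3 (first statement): for `n ≥ 3`, a closed set in `ℝⁿ` invariant under every
rotation fixing pointwise one of two distinct lines `H₁ ≠ H₂` through the origin is a union
of spheres centered at the origin. -/
theorem union_of_spheres_of_two_axes (n : ℕ) (hn : 3 ≤ n)
    (H₁ H₂ : Submodule ℝ (EuclideanSpace ℝ (Fin n)))
    (h₁ : Module.finrank ℝ H₁ = 1) (h₂ : Module.finrank ℝ H₂ = 1) (hne : H₁ ≠ H₂)
    (F : Set (EuclideanSpace ℝ (Fin n))) (hF : IsClosed F)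
    (hinv : ∀ g : EuclideanSpace ℝ (Fin n) ≃ₗᵢ[ℝ] EuclideanSpace ℝ (Fin n),
      LinearMap.det (g.toLinearEquiv :
        EuclideanSpace ℝ (Fin n) →ₗ[ℝ] EuclideanSpace ℝ (Fin n)) = 1 →
      ((∀ x ∈ H₁, g x = x) ∨ (∀ x ∈ H₂, g x = x)) → g '' F = F) :
    ∀ x ∈ F, ∀ y : EuclideanSpace ℝ (Fin n), ‖y‖ = ‖x‖ → y ∈ F := by
  have hE : 2 < finrank ℝ (EuclideanSpace ℝ (Fin n)) := by
    rw [finrank_euclideanSpace_fin]; omega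
  obtain ⟨u, hu, rfl⟩ := exists_norm_eq_one_eq_span_singleton h₁
  obtain ⟨v, -, rfl⟩ := exists_norm_eq_one_eq_span_singleton h₂
  have hvu : v ∉ ℝ ∙ u := fun hv =>
    hne (eq_of_le_of_finrank_eq ((span_singleton_le_iff_mem _ _).mpr hv) (h₂.trans h₁.symm)).symm
  have hFu := isUnionOfParallels_of_rotation_invariant hE le_rfl fun g hg hfix =>
    hinv g hg (.inl hfix)
  have hFv := isUnionOfParallels_of_rotation_invariant hE le_rfl fun g hg hfix =>
    hinv g hg (.inr hfix)
  obtain ⟨m, e, α, β, horth, hβ, rfl⟩ := exists_orthonormal_of_notMem_span_singleton hE hu hvu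
  exact fun x hx y hy => hFu.mem_of_norm_eq horth hβ hF hFv hx hy
end
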